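/- arXiv:1506.00016 — 5 statements merged into one kernel-verified Lean document; each statement's English description precedes it below -/
import Mathlib

section
/- Let u ∈ C¹([0,T]×ℝ₊) be nonnegative and satisfy ∂_t u + ∂_x u + c u = 0 with c continuous. Let l_{i−1}(t) = t + l_{i−1}(0), l_i(t) = t + l_i(0) with 0 ≤ l_{i−1}(0) < l_i(0), and suppose the cohort mass m_i(t) := ∫_{l_{i−1}(t)}^{l_i(t)} u(t,x) dx is strictly positive on [0,T]. Define the cohort location x_i(t) := (1/m_i(t)) ∫_{l_{i−1}(t)}^{l_i(t)} x u(t,x) dx. Then (d/dt) x_i(t) = (1/m_i(t)) ∫_{l_{i−1}(t)}^{l_i(t)} (x_i(t) − x) c(t,x) u(t,x) dx + 1. -/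
/-!
The cohort mass `m(s) = ∫ u` and first moment `N(s) = ∫ x u` are integrals over an interval that
moves with unit speed. Substituting `x = s + y` turns them into integrals over the fixed interval
`[l₀, l₁]` of functions of `(s, s + y)`, which may be differentiated under the integral sign; along
the characteristic `s ↦ (s, s + y)` the equation reads `d/ds u(s, s + y) = -c u`. Hence
`m' = -∫ c u` and `N' = m - ∫ x c u`, and the quotient rule for `xᵢ = N / m` gives the formula.
-/

open MeasureTheory Set intervalIntegral Filter Topology Function Interval

theorem Set.uIcc_subset_Ici {α : Type*} [Lattice α] {a b c : α} (ha : c ≤ a) (hb : c ≤ b) :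
    [[a, b]] ⊆ Ici c :=
  fun _ hy => (le_inf ha hb).trans hy.1

theorem ContinuousOn.intervalIntegrable_slice {E : Type*} [NormedAddCommGroup E] {v : ℝ → ℝ → E}
    {S I : Set ℝ} {t a b : ℝ} (hv : ContinuousOn (uncurry v) (S ×ˢ I)) (ht : t ∈ S)
    (hab : [[a, b]] ⊆ I) :
    IntervalIntegrable (v t) volume a b :=
  ((hv.uncurry_left t ht).mono hab).intervalIntegrable

section Calculus

variable {E : Type*} [NormedAddCommGroup E] [NormedSpace ℝ E]

theorem hasDerivAt_along_diagonal {f ft fx : ℝ → ℝ → E} {t y : ℝ}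
    (hft : ∀ᶠ p in 𝓝 (t, t + y), HasDerivAt (f · p.2) (ft p.1 p.2) p.1)
    (hfx : ∀ᶠ p in 𝓝 (t, t + y), HasDerivAt (f p.1 ·) (fx p.1 p.2) p.2)
    (hft_cont : ContinuousAt (uncurry ft) (t, t + y))
    (hfx_cont : ContinuousAt (uncurry fx) (t, t + y)) :
    HasDerivAt (fun s => f s (s + y)) (ft t (t + y) + fx t (t + y)) t := by
  have hspan : Continuous (ContinuousLinearMap.toSpanSingleton ℝ : E → ℝ →L[ℝ] E) :=
    (ContinuousLinearMap.toSpanSingletonLIE ℝ E).continuous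
  have hf := (hasStrictFDerivAt_uncurry_coprod
    (f₁ := fun s x => .toSpanSingleton ℝ (ft s x)) (f₂ := fun s x => .toSpanSingleton ℝ (fx s x))
    hft hfx (hspan.continuousAt.comp hft_cont) (hspan.continuousAt.comp hfx_cont)).hasFDerivAt
  have hcurve : HasDerivAt (fun s : ℝ => (s, s + y)) (1, 1) t :=
    (hasDerivAt_id t).prodMk ((hasDerivAt_id t).add_const y)
  simpa [Function.comp_def, HasUncurry.uncurry] using hf.comp_hasDerivAt t hcurve

theorem hasDerivAt_intervalIntegral_of_continuousOn {F F' : ℝ → ℝ → E} {t a b : ℝ} {K : Set ℝ}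
    (hK : K ∈ 𝓝 t) (hKc : IsCompact K)
    (hF : ContinuousOn (uncurry F) (K ×ˢ [[a, b]]))
    (hF' : ContinuousOn (uncurry F') (K ×ˢ [[a, b]]))
    (hdiff : ∀ s ∈ K, ∀ y ∈ [[a, b]], HasDerivAt (F · y) (F' s y) s) :
    HasDerivAt (fun s => ∫ y in a..b, F s y) (∫ y in a..b, F' t y) t := by
  obtain ⟨C, hC⟩ := (hKc.prod isCompact_uIcc).exists_bound_of_continuousOn hF'
  have hmeas : ∀ {G : ℝ → ℝ → E}, ContinuousOn (uncurry G) (K ×ˢ [[a, b]]) → ∀ s ∈ K,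
      AEStronglyMeasurable (G s) (volume.restrict (Ι a b)) := fun hG s hs =>
    ((hG.uncurry_left s hs).mono uIoc_subset_uIcc).aestronglyMeasurable measurableSet_uIoc
  refine (hasDerivAt_integral_of_dominated_loc_of_deriv_le (bound := fun _ => C) hK
    (eventually_of_mem hK (hmeas hF)) (hF.intervalIntegrable_slice (mem_of_mem_nhds hK) le_rfl)
    (hmeas hF' t (mem_of_mem_nhds hK)) ?_ intervalIntegrable_const ?_).2
  · exact .of_forall fun y hy s hs => hC (s, y) ⟨hs, uIoc_subset_uIcc hy⟩
  · exact .of_forall fun y hy s hs => hdiff s hs y (uIoc_subset_uIcc hy)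

theorem hasDerivAt_integral_comoving {f g : ℝ → ℝ → E} {t a b : ℝ} {K : Set ℝ}
    (hK : K ∈ 𝓝 t) (hKc : IsCompact K)
    (hf : ContinuousOn (fun p : ℝ × ℝ => f p.1 (p.1 + p.2)) (K ×ˢ [[a, b]]))
    (hg : ContinuousOn (fun p : ℝ × ℝ => g p.1 (p.1 + p.2)) (K ×ˢ [[a, b]]))
    (hfg : ∀ s ∈ K, ∀ y ∈ [[a, b]], HasDerivAt (fun r => f r (r + y)) (g s (s + y)) s) :
    HasDerivAt (fun s => ∫ x in s + a..s + b, f s x) (∫ x in t + a..t + b, g t x) t := by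
  simp_rw [← integral_comp_add_left]
  exact hasDerivAt_intervalIntegral_of_continuousOn (F := fun s y => f s (s + y))
    (F' := fun s y => g s (s + y)) hK hKc hf hg hfg

end Calculus

structure IsTransportSolution (T : ℝ) (c u ut ux : ℝ → ℝ → ℝ) : Prop where
  hasDerivAt_time : ∀ t ∈ Icc (0:ℝ) T, ∀ x ∈ Ici (0:ℝ), HasDerivAt (fun s => u s x) (ut t x) t
  hasDerivAt_space : ∀ t ∈ Icc (0:ℝ) T, ∀ x ∈ Ici (0:ℝ), HasDerivAt (fun y => u t y) (ux t x) x
  continuousOn : ContinuousOn (uncurry u) (Icc 0 T ×ˢ Ici 0)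
  continuousOn_deriv_space : ContinuousOn (uncurry ux) (Icc 0 T ×ˢ Ici 0)
  continuousOn_coeff : ContinuousOn (uncurry c) (Icc 0 T ×ˢ Ici 0)
  pde : ∀ t ∈ Icc (0:ℝ) T, ∀ x ∈ Ici (0:ℝ), ut t x + ux t x + c t x * u t x = 0

namespace IsTransportSolution

variable {T : ℝ} {c u ut ux : ℝ → ℝ → ℝ}

/-- The time derivative `ut = -(ux + c u)` is continuous by the equation itself. -/
theorem hasDerivAt_along_characteristic (hu : IsTransportSolution T c u ut ux) {s y : ℝ}
    (hs : s ∈ Ioo 0 T) (hy : 0 < s + y) :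
    HasDerivAt (fun r => u r (r + y)) (-(c s (s + y) * u s (s + y))) s := by
  have hD : Icc 0 T ×ˢ Ici 0 ∈ 𝓝 (s, s + y) :=
    prod_mem_nhds (Icc_mem_nhds hs.1 hs.2) (Ici_mem_nhds hy)
  have hut : ∀ᶠ p in 𝓝 (s, s + y),
      HasDerivAt (u · p.2) (-(ux p.1 p.2 + c p.1 p.2 * u p.1 p.2)) p.1 :=
    eventually_of_mem hD fun p hp => (hu.hasDerivAt_time p.1 hp.1 p.2 hp.2).congr_deriv
      (by linarith [hu.pde p.1 hp.1 p.2 hp.2])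
  have hut_cont : ContinuousAt (fun p : ℝ × ℝ => -(ux p.1 p.2 + c p.1 p.2 * u p.1 p.2))
      (s, s + y) :=
    (hu.continuousOn_deriv_space.add
      (hu.continuousOn_coeff.mul hu.continuousOn)).neg.continuousAt hD
  exact (hasDerivAt_along_diagonal (ft := fun s x => -(ux s x + c s x * u s x)) hut
    (eventually_of_mem hD fun p hp => hu.hasDerivAt_space p.1 hp.1 p.2 hp.2) hut_cont
    (hu.continuousOn_deriv_space.continuousAt hD)).congr_deriv (by ring)

theorem hasDerivAt_cohort_moment (hu : IsTransportSolution T c u ut ux) {φ φ' : ℝ → ℝ}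
    (hφ : ∀ x, HasDerivAt φ (φ' x) x) (hφ' : Continuous φ') {a b t : ℝ} (ha : 0 ≤ a) (hb : 0 ≤ b)
    (ht : t ∈ Ioo 0 T) :
    HasDerivAt (fun s => ∫ x in s + a..s + b, φ x * u s x)
      (∫ x in t + a..t + b, (φ' x - φ x * c t x) * u t x) t := by
  have hK : Icc (t / 2) ((t + T) / 2) ∈ 𝓝 t :=
    Icc_mem_nhds (by linarith [ht.1]) (by linarith [ht.2])
  have hK_sub : ∀ s ∈ Icc (t / 2) ((t + T) / 2), s ∈ Ioo 0 T := fun s hs =>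
    ⟨by linarith [ht.1, hs.1], by linarith [ht.2, hs.2]⟩
  have hy : ∀ y ∈ [[a, b]], 0 ≤ y := uIcc_subset_Ici ha hb
  have hcomoving : ∀ {v : ℝ → ℝ → ℝ}, ContinuousOn (uncurry v) (Icc 0 T ×ˢ Ici 0) →
      ContinuousOn (fun p : ℝ × ℝ => v p.1 (p.1 + p.2)) (Icc (t / 2) ((t + T) / 2) ×ˢ [[a, b]]) :=
    fun hv => hv.comp (f := fun p : ℝ × ℝ => (p.1, p.1 + p.2)) (by fun_prop) fun p hp =>
      ⟨Ioo_subset_Icc_self (hK_sub p.1 hp.1),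
        show 0 ≤ p.1 + p.2 by linarith [(hK_sub p.1 hp.1).1, hy p.2 hp.2]⟩
  have hφ_cont : Continuous fun p : ℝ × ℝ => φ (p.1 + p.2) :=
    (continuous_iff_continuousAt.2 fun x => (hφ x).continuousAt).comp (by fun_prop)
  have hφ'_cont : Continuous fun p : ℝ × ℝ => φ' (p.1 + p.2) := hφ'.comp (by fun_prop)
  refine hasDerivAt_integral_comoving (f := fun s x => φ x * u s x)
    (g := fun s x => (φ' x - φ x * c s x) * u s x) hK isCompact_Icc
    (hφ_cont.continuousOn.mul (hcomoving hu.continuousOn))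
    ((hφ'_cont.continuousOn.sub (hφ_cont.continuousOn.mul
      (hcomoving hu.continuousOn_coeff))).mul (hcomoving hu.continuousOn)) fun s hs y hy' => ?_
  have hs := hK_sub s hs
  exact (((hφ (s + y)).comp_add_const s y).fun_mul
    (hu.hasDerivAt_along_characteristic (y := y) hs (by linarith [hs.1, hy y hy']))).congr_deriv
    (by ring)

theorem hasDerivAt_cohort_mass (hu : IsTransportSolution T c u ut ux) {a b t : ℝ} (ha : 0 ≤ a)
    (hb : 0 ≤ b) (ht : t ∈ Ioo 0 T) :
    HasDerivAt (fun s => ∫ x in s + a..s + b, u s x) (-∫ x in t + a..t + b, c t x * u t x) t := by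
  simpa only [one_mul, zero_sub, neg_mul, intervalIntegral.integral_neg] using
    hu.hasDerivAt_cohort_moment (φ := fun _ => 1) (φ' := fun _ => 0)
      (fun _ => hasDerivAt_const _ _) continuous_const ha hb ht

theorem intervalIntegrable_mul_coeff_mul (hu : IsTransportSolution T c u ut ux) {φ : ℝ → ℝ}
    (hφ : Continuous φ) {t a b : ℝ} (ht : t ∈ Icc 0 T) (hab : [[a, b]] ⊆ Ici 0) :
    IntervalIntegrable (fun x => φ x * (c t x * u t x)) volume a b :=
  ContinuousOn.intervalIntegrable_slice (v := fun s x => φ x * (c s x * u s x))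
    ((hφ.comp continuous_snd).continuousOn.mul (hu.continuousOn_coeff.mul hu.continuousOn)) ht hab

theorem hasDerivAt_cohort_first_moment (hu : IsTransportSolution T c u ut ux) {a b t : ℝ}
    (ha : 0 ≤ a) (hb : 0 ≤ b) (ht : t ∈ Ioo 0 T) :
    HasDerivAt (fun s => ∫ x in s + a..s + b, x * u s x)
      ((∫ x in t + a..t + b, u t x) - ∫ x in t + a..t + b, x * (c t x * u t x)) t := by
  have hslice : [[t + a, t + b]] ⊆ Ici 0 :=
    uIcc_subset_Ici (by linarith [ht.1]) (by linarith [ht.1])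
  rw [← intervalIntegral.integral_sub
    (hu.continuousOn.intervalIntegrable_slice (Ioo_subset_Icc_self ht) hslice)
    (hu.intervalIntegrable_mul_coeff_mul continuous_id' (Ioo_subset_Icc_self ht) hslice)]
  refine (hu.hasDerivAt_cohort_moment (φ := fun x => x) (φ' := fun _ => 1) hasDerivAt_id'
    continuous_const ha hb ht).congr_deriv ?_
  congr 1; ext x; ring

end IsTransportSolution

theorem ebt_cohort_location_derivative_general
    (T : ℝ)
    (u ut ux c : ℝ → ℝ → ℝ)
    (hut : ∀ t ∈ Icc (0:ℝ) T, ∀ x ∈ Ici (0:ℝ), HasDerivAt (fun s => u s x) (ut t x) t)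
    (hux : ∀ t ∈ Icc (0:ℝ) T, ∀ x ∈ Ici (0:ℝ), HasDerivAt (fun y => u t y) (ux t x) x)
    (hu_cont : ContinuousOn (fun p : ℝ × ℝ => u p.1 p.2) (Icc 0 T ×ˢ Ici 0))
    (hux_cont : ContinuousOn (fun p : ℝ × ℝ => ux p.1 p.2) (Icc 0 T ×ˢ Ici 0))
    (hc_cont : ContinuousOn (fun p : ℝ × ℝ => c p.1 p.2) (Icc 0 T ×ˢ Ici 0))
    (hpde : ∀ t ∈ Icc (0:ℝ) T, ∀ x ∈ Ici (0:ℝ), ut t x + ux t x + c t x * u t x = 0)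
    (l₀ l₁ : ℝ) (hl₀ : 0 ≤ l₀) (hl : l₀ < l₁)
    (mi xi : ℝ → ℝ)
    (hmi : ∀ s, mi s = ∫ x in (s + l₀)..(s + l₁), u s x)
    (hmi_pos : ∀ t ∈ Icc (0:ℝ) T, 0 < mi t)
    (hxi : ∀ s, xi s = (1 / mi s) * ∫ x in (s + l₀)..(s + l₁), x * u s x) :
    ∀ t ∈ Ioo (0:ℝ) T,
      HasDerivAt xi
        ((1 / mi t) * (∫ x in (t + l₀)..(t + l₁), (xi t - x) * (c t x * u t x)) + 1) t := by
  intro t ht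
  have hu : IsTransportSolution T c u ut ux := ⟨hut, hux, hu_cont, hux_cont, hc_cont, hpde⟩
  have hl₁ : 0 ≤ l₁ := hl₀.trans hl.le
  have hslice : [[t + l₀, t + l₁]] ⊆ Ici 0 :=
    uIcc_subset_Ici (by linarith [ht.1]) (by linarith [ht.1])
  have hmass : HasDerivAt mi (-∫ x in (t + l₀)..(t + l₁), c t x * u t x) t :=
    funext hmi ▸ hu.hasDerivAt_cohort_mass hl₀ hl₁ ht
  have hxi_eq : xi = fun s => (∫ x in (s + l₀)..(s + l₁), x * u s x) / mi s :=
    funext fun s => by rw [hxi, one_div_mul_eq_div]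
  have hspread : ∀ X, ∫ x in (t + l₀)..(t + l₁), (X - x) * (c t x * u t x)
      = X * (∫ x in (t + l₀)..(t + l₁), c t x * u t x)
        - ∫ x in (t + l₀)..(t + l₁), x * (c t x * u t x) := fun X => by
    rw [← intervalIntegral.integral_const_mul, ← intervalIntegral.integral_sub
      (hu.intervalIntegrable_mul_coeff_mul continuous_const (Ioo_subset_Icc_self ht) hslice)
      (hu.intervalIntegrable_mul_coeff_mul continuous_id' (Ioo_subset_Icc_self ht) hslice)]
    congr 1; ext x; ring
  have hm0 : mi t ≠ 0 := (hmi_pos t (Ioo_subset_Icc_self ht)).ne'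
  rw [hspread, hxi_eq]
  refine ((hu.hasDerivAt_cohort_first_moment hl₀ hl₁ ht).div hmass hm0).congr_deriv ?_
  rw [← hmi]
  field_simp
  ring

/-- For a nonnegative `C¹` solution of `∂ₜu + ∂ₓu + c u = 0`,
the location (centroid) of an internal cohort with strictly positive mass
satisfies `(d/dt) xᵢ(t) = (1/mᵢ(t)) ∫_{Ωᵢ(t)} (xᵢ(t) − x) c u dx + 1`. -/
theorem ebt_cohort_location_derivative
    (T : ℝ) (hT : 0 < T)
    (u ut ux c : ℝ → ℝ → ℝ)
    (hu_nonneg : ∀ t ∈ Icc (0:ℝ) T, ∀ x ∈ Ici (0:ℝ), 0 ≤ u t x)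
    (hut : ∀ t ∈ Icc (0:ℝ) T, ∀ x ∈ Ici (0:ℝ), HasDerivAt (fun s => u s x) (ut t x) t)
    (hux : ∀ t ∈ Icc (0:ℝ) T, ∀ x ∈ Ici (0:ℝ), HasDerivAt (fun y => u t y) (ux t x) x)
    (hu_cont : ContinuousOn (fun p : ℝ × ℝ => u p.1 p.2) (Icc 0 T ×ˢ Ici 0))
    (hut_cont : ContinuousOn (fun p : ℝ × ℝ => ut p.1 p.2) (Icc 0 T ×ˢ Ici 0))
    (hux_cont : ContinuousOn (fun p : ℝ × ℝ => ux p.1 p.2) (Icc 0 T ×ˢ Ici 0))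
    (hc_cont : ContinuousOn (fun p : ℝ × ℝ => c p.1 p.2) (Icc 0 T ×ˢ Ici 0))
    (hpde : ∀ t ∈ Icc (0:ℝ) T, ∀ x ∈ Ici (0:ℝ), ut t x + ux t x + c t x * u t x = 0)
    (l₀ l₁ : ℝ) (hl₀ : 0 ≤ l₀) (hl : l₀ < l₁)
    (mi xi : ℝ → ℝ)
    (hmi : ∀ s, mi s = ∫ x in (s + l₀)..(s + l₁), u s x)
    (hmi_pos : ∀ t ∈ Icc (0:ℝ) T, 0 < mi t)
    (hxi : ∀ s, xi s = (1 / mi s) * ∫ x in (s + l₀)..(s + l₁), x * u s x) :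
    ∀ t ∈ Ioo (0:ℝ) T,
      HasDerivAt xi
        ((1 / mi t) * (∫ x in (t + l₀)..(t + l₁), (xi t - x) * (c t x * u t x)) + 1) t :=
  ebt_cohort_location_derivative_general T u ut ux c hut hux hu_cont hux_cont hc_cont hpde l₀ l₁ hl₀
    hl mi xi hmi hmi_pos hxi
end

section
/- Let u ∈ C¹([t_n,t_{n+1}]×ℝ₊) be nonnegative and satisfy ∂_t u + ∂_x u + c u = 0 with c continuous. Let the boundary cohort be Ω_B(t) = [0, l_B(t)) with l_B(t) = t − t_n, and define Π_B(t) := ∫_{Ω_B(t)} x u(t,x) dx and m_B(t) := ∫_{Ω_B(t)} u(t,x) dx. Then for t ∈ (t_n,t_{n+1}): (d/dt) Π_B(t) = −∫_{Ω_B(t)} x c(t,x) u(t,x) dx + m_B(t). -/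
/-!
Reynolds' transport theorem for the cohort `[0, t - tₙ)`, whose right endpoint moves with unit
speed, gives `Π_B' = l_B u(t, l_B) + ∫_{Ω_B} x ∂ₜu dx`. Substituting `∂ₜu = -∂ₓu - c u` and
integrating `∫_{Ω_B} x ∂ₓu dx = l_B u(t, l_B) - m_B` by parts, the boundary flux cancels.
-/

open MeasureTheory Set intervalIntegral Filter Function Topology
open scoped Interval

section Leibniz

variable {E : Type*} [NormedAddCommGroup E] [NormedSpace ℝ E]

theorem hasDerivAt_intervalIntegral_of_continuousOn_s9 {f f' : ℝ → ℝ → E} {t₀ t₁ t a b : ℝ}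
    (ht : t ∈ Ioo t₀ t₁) (hf : ContinuousOn (uncurry f) (Icc t₀ t₁ ×ˢ uIcc a b))
    (hf' : ContinuousOn (uncurry f') (Icc t₀ t₁ ×ˢ uIcc a b))
    (hderiv : ∀ s ∈ Ioo t₀ t₁, ∀ x ∈ uIcc a b, HasDerivAt (f · x) (f' s x) s) :
    HasDerivAt (fun s => ∫ x in a..b, f s x) (∫ x in a..b, f' t x) t := by
  obtain ⟨M, hM⟩ := (isCompact_Icc.prod isCompact_uIcc).exists_bound_of_continuousOn hf'
  have hsection : ∀ s ∈ Icc t₀ t₁, ContinuousOn (f s) (uIcc a b) := fun s hs =>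
    hf.uncurry_left s hs
  refine (hasDerivAt_integral_of_dominated_loc_of_deriv_le (bound := fun _ => M)
    (Ioo_mem_nhds ht.1 ht.2) ?_ (hsection t (Ioo_subset_Icc_self ht)).intervalIntegrable
    (((hf'.uncurry_left t (Ioo_subset_Icc_self ht)).mono uIoc_subset_uIcc).aestronglyMeasurable
      measurableSet_uIoc) ?_ intervalIntegrable_const ?_).2
  · filter_upwards [Ioo_mem_nhds ht.1 ht.2] with s hs
    exact ((hsection s (Ioo_subset_Icc_self hs)).mono uIoc_subset_uIcc).aestronglyMeasurable
      measurableSet_uIoc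
  · exact ae_of_all _ fun x hx s hs =>
      hM (s, x) ⟨Ioo_subset_Icc_self hs, uIoc_subset_uIcc hx⟩
  · exact ae_of_all _ fun x hx s hs => hderiv s hs x (uIoc_subset_uIcc hx)

theorem hasDerivAt_intervalIntegral_sub_const_right [CompleteSpace E] {f : ℝ → ℝ → E} {t d : ℝ}
    (hf : ContinuousAt (uncurry f) (t, t - d))
    (hint : ∀ᶠ s in 𝓝 t, IntervalIntegrable (f s) volume (t - d) (s - d)) :
    HasDerivAt (fun s => ∫ x in (t - d)..(s - d), f s x) (f t (t - d)) t := by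
  rw [hasDerivAt_iff_isLittleO, Asymptotics.isLittleO_iff]
  intro ε hε
  obtain ⟨δ, hδ, hclose⟩ := Metric.continuousAt_iff.1 hf ε hε
  filter_upwards [hint, Metric.ball_mem_nhds t hδ] with s hs_int hs_ball
  have hbound : ∀ x ∈ Ι (t - d) (s - d), ‖f s x - f t (t - d)‖ ≤ ε := by
    intro x hx
    have hx_near : |x - (t - d)| ≤ |s - t| := by
      simpa using abs_sub_left_of_mem_uIcc (uIoc_subset_uIcc hx)
    rw [← dist_eq_norm]
    refine (hclose (x := (s, x)) ?_).le
    rw [Prod.dist_eq, Real.dist_eq, Real.dist_eq]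
    exact max_lt hs_ball (hx_near.trans_lt hs_ball)
  calc ‖(∫ x in (t - d)..(s - d), f s x) - (∫ x in (t - d)..(t - d), f t x)
        - (s - t) • f t (t - d)‖
      = ‖∫ x in (t - d)..(s - d), (f s x - f t (t - d))‖ := by
        rw [integral_same, integral_sub hs_int intervalIntegrable_const,
          intervalIntegral.integral_const, sub_sub_sub_cancel_right, sub_zero]
    _ ≤ ε * |s - d - (t - d)| := norm_integral_le_of_norm_le_const hbound
    _ = ε * ‖s - t‖ := by rw [sub_sub_sub_cancel_right, Real.norm_eq_abs]

theorem hasDerivAt_integral_zero_sub_const [CompleteSpace E] {f f' : ℝ → ℝ → E} {t₀ t₁ t : ℝ}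
    (ht : t ∈ Ioo t₀ t₁) (hf : ContinuousOn (uncurry f) (Icc t₀ t₁ ×ˢ Ici 0))
    (hf' : ContinuousOn (uncurry f') (Icc t₀ t₁ ×ˢ Ici 0))
    (hderiv : ∀ s ∈ Ioo t₀ t₁, ∀ x ∈ Ici (0 : ℝ), HasDerivAt (f · x) (f' s x) s) :
    HasDerivAt (fun s => ∫ x in (0 : ℝ)..(s - t₀), f s x)
      (f t (t - t₀) + ∫ x in (0 : ℝ)..(t - t₀), f' t x) t := by
  have hl : 0 < t - t₀ := sub_pos.2 ht.1
  have hsub : ∀ {a b : ℝ}, 0 ≤ a → 0 ≤ b → uIcc a b ⊆ Ici 0 := fun ha hb _ hx =>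
    (le_min ha hb).trans hx.1
  have hint : ∀ s ∈ Ioo t₀ t₁, ∀ {a b : ℝ}, 0 ≤ a → 0 ≤ b →
      IntervalIntegrable (f s) volume a b := fun s hs _ _ ha hb =>
    ((hf.uncurry_left s (Ioo_subset_Icc_self hs)).mono (hsub ha hb)).intervalIntegrable
  have hfixed := hasDerivAt_intervalIntegral_of_continuousOn_s9 ht
    (hf.mono (prod_mono subset_rfl (hsub le_rfl hl.le)))
    (hf'.mono (prod_mono subset_rfl (hsub le_rfl hl.le)))
    fun s hs x hx => hderiv s hs x (hsub le_rfl hl.le hx)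
  have hmoving := hasDerivAt_intervalIntegral_sub_const_right (f := f) (d := t₀)
    (hf.continuousAt (prod_mem_nhds (Icc_mem_nhds ht.1 ht.2) (Ici_mem_nhds hl)))
    (by
      filter_upwards [Ioo_mem_nhds ht.1 ht.2] with s hs
      exact hint s hs hl.le (sub_pos.2 hs.1).le)
  -- split `[0, s - t₀]` at the current endpoint `t - t₀`
  rw [add_comm]
  refine (hfixed.add hmoving).congr_of_eventuallyEq ?_
  filter_upwards [Ioo_mem_nhds ht.1 ht.2] with s hs
  exact (integral_add_adjacent_intervals (hint s hs le_rfl hl.le)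
    (hint s hs hl.le (sub_pos.2 hs.1).le)).symm

end Leibniz

theorem integral_id_mul_deriv {v v' : ℝ → ℝ} {a b : ℝ}
    (hv : ∀ x ∈ uIcc a b, HasDerivAt v (v' x) x) (hv' : IntervalIntegrable v' volume a b) :
    ∫ x in a..b, x * v' x = b * v b - a * v a - ∫ x in a..b, v x := by
  simpa using integral_mul_deriv_eq_deriv_mul (fun x _ => hasDerivAt_id x) hv
    intervalIntegrable_const hv'

theorem ebt_boundary_cohort_first_moment_derivative_general
    (tn tn1 : ℝ)
    (u ut ux c : ℝ → ℝ → ℝ)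
    (hut : ∀ t ∈ Icc tn tn1, ∀ x ∈ Ici (0:ℝ), HasDerivAt (fun s => u s x) (ut t x) t)
    (hux : ∀ t ∈ Icc tn tn1, ∀ x ∈ Ici (0:ℝ), HasDerivAt (fun y => u t y) (ux t x) x)
    (hu_cont : ContinuousOn (fun p : ℝ × ℝ => u p.1 p.2) (Icc tn tn1 ×ˢ Ici 0))
    (hut_cont : ContinuousOn (fun p : ℝ × ℝ => ut p.1 p.2) (Icc tn tn1 ×ˢ Ici 0))
    (hux_cont : ContinuousOn (fun p : ℝ × ℝ => ux p.1 p.2) (Icc tn tn1 ×ˢ Ici 0))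
    (hc_cont : ContinuousOn (fun p : ℝ × ℝ => c p.1 p.2) (Icc tn tn1 ×ˢ Ici 0))
    (hpde : ∀ t ∈ Icc tn tn1, ∀ x ∈ Ici (0:ℝ), ut t x + ux t x + c t x * u t x = 0)
    (PiB mB : ℝ → ℝ)
    (hPiB : ∀ s, PiB s = ∫ x in (0:ℝ)..(s - tn), x * u s x)
    (hmB : ∀ s, mB s = ∫ x in (0:ℝ)..(s - tn), u s x) :
    ∀ t ∈ Ioo tn tn1,
      HasDerivAt PiB ((-∫ x in (0:ℝ)..(t - tn), x * (c t x * u t x)) + mB t) t := by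
  intro t ht
  have htIcc : t ∈ Icc tn tn1 := Ioo_subset_Icc_self ht
  have hsub : uIcc 0 (t - tn) ⊆ Ici (0 : ℝ) := fun _ hx =>
    (le_min le_rfl (sub_pos.2 ht.1).le).trans hx.1
  have hsection : ∀ g : ℝ → ℝ → ℝ, ContinuousOn (uncurry g) (Icc tn tn1 ×ˢ Ici 0) →
      ContinuousOn (g t) (uIcc 0 (t - tn)) := fun g hg => (hg.uncurry_left t htIcc).mono hsub
  have hreynolds := hasDerivAt_integral_zero_sub_const (f := fun s x => x * u s x)
    (f' := fun s x => x * ut s x) ht (continuous_snd.continuousOn.mul hu_cont)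
    (continuous_snd.continuousOn.mul hut_cont)
    fun s hs x hx => (hut s (Ioo_subset_Icc_self hs) x hx).const_mul x
  have htransport : ∫ x in (0 : ℝ)..(t - tn), x * ut t x
      = -(∫ x in (0 : ℝ)..(t - tn), x * ux t x)
        - ∫ x in (0 : ℝ)..(t - tn), x * (c t x * u t x) := by
    have hflux : IntervalIntegrable (fun x => -(x * ux t x)) volume 0 (t - tn) :=
      (continuous_id.continuousOn.mul (hsection ux hux_cont)).neg.intervalIntegrable
    have hdecay : IntervalIntegrable (fun x => x * (c t x * u t x)) volume 0 (t - tn) :=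
      (continuous_id.continuousOn.mul
        ((hsection c hc_cont).mul (hsection u hu_cont))).intervalIntegrable
    rw [← intervalIntegral.integral_neg, ← integral_sub hflux hdecay]
    exact integral_congr fun x hx => by linear_combination x * hpde t htIcc x (hsub hx)
  have hparts : ∫ x in (0 : ℝ)..(t - tn), x * ux t x = (t - tn) * u t (t - tn) - mB t := by
    rw [integral_id_mul_deriv (fun x hx => hux t htIcc x (hsub hx))
      (hsection ux hux_cont).intervalIntegrable, hmB]
    ring
  rw [show PiB = _ from funext hPiB]
  refine hreynolds.congr_deriv ?_
  rw [htransport, hparts]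
  ring

/-- For a nonnegative `C¹` solution of `∂ₜu + ∂ₓu + c u = 0`,
the first moment `Π_B` of the boundary cohort `Ω_B(t) = [0, t − tₙ)` satisfies
`(d/dt) Π_B(t) = −∫_{Ω_B(t)} x c u dx + m_B(t)`. -/
theorem ebt_boundary_cohort_first_moment_derivative
    (tn tn1 : ℝ) (htn : tn < tn1)
    (u ut ux c : ℝ → ℝ → ℝ)
    (hu_nonneg : ∀ t ∈ Icc tn tn1, ∀ x ∈ Ici (0:ℝ), 0 ≤ u t x)
    (hut : ∀ t ∈ Icc tn tn1, ∀ x ∈ Ici (0:ℝ), HasDerivAt (fun s => u s x) (ut t x) t)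
    (hux : ∀ t ∈ Icc tn tn1, ∀ x ∈ Ici (0:ℝ), HasDerivAt (fun y => u t y) (ux t x) x)
    (hu_cont : ContinuousOn (fun p : ℝ × ℝ => u p.1 p.2) (Icc tn tn1 ×ˢ Ici 0))
    (hut_cont : ContinuousOn (fun p : ℝ × ℝ => ut p.1 p.2) (Icc tn tn1 ×ˢ Ici 0))
    (hux_cont : ContinuousOn (fun p : ℝ × ℝ => ux p.1 p.2) (Icc tn tn1 ×ˢ Ici 0))
    (hc_cont : ContinuousOn (fun p : ℝ × ℝ => c p.1 p.2) (Icc tn tn1 ×ˢ Ici 0))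
    (hpde : ∀ t ∈ Icc tn tn1, ∀ x ∈ Ici (0:ℝ), ut t x + ux t x + c t x * u t x = 0)
    (PiB mB : ℝ → ℝ)
    (hPiB : ∀ s, PiB s = ∫ x in (0:ℝ)..(s - tn), x * u s x)
    (hmB : ∀ s, mB s = ∫ x in (0:ℝ)..(s - tn), u s x) :
    ∀ t ∈ Ioo tn tn1,
      HasDerivAt PiB ((-∫ x in (0:ℝ)..(t - tn), x * (c t x * u t x)) + mB t) t :=
  ebt_boundary_cohort_first_moment_derivative_general tn tn1 u ut ux c hut hux hu_cont hut_cont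
    hux_cont hc_cont hpde PiB mB hPiB hmB
end

section
/- Let u^c ∈ C¹([0,T]×ℝ₊²) be nonnegative and satisfy ∂_t u^c + ∂_x u^c + ∂_y u^c + c^c u^c = 𝒯 with c^c, 𝒯 continuous. With the moving rectangle Ω^c_{ij}(t) = [l^m_{i−1}(t), l^m_i(t)) × [l^f_{j−1}(t), l^f_j(t)), all four edges moving with unit speed (l(t) = t + l(0)), define the first moments (x̄^c_{ij}(t), ȳ^c_{ij}(t)) := ∬_{Ω^c_{ij}(t)} (x,y) u^c(t,x,y) dx dy and the mass m^c_{ij}(t) := ∬_{Ω^c_{ij}(t)} u^c(t,x,y) dx dy. Then (d/dt)(x̄^c_{ij}(t), ȳ^c_{ij}(t)) = ∬_{Ω^c_{ij}(t)} (x,y) [𝒯(t,x,y) − c^c(t,x,y) u^c(t,x,y)] dx dy + (1,1) m^c_{ij}(t). -/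
/-!
Translating the rectangle back to its position at time `0` turns a cohort moment into an
integral over a fixed rectangle, of the solution evaluated along the characteristics
`σ ↦ q + (σ, σ)`. Since the partial derivatives of `u` are continuous, `u` is differentiable
as a function of `(t, x, y)`, so along a characteristic `u` changes at rate
`∂ₜu + ∂ₓu + ∂_y u = 𝒯 - c u`, while the weight `x` (or `y`) grows at unit rate and so
contributes the mass. Everything is continuous on a compact cylinder, which dominates the
derivative and allows differentiation under the integral sign.
-/

open MeasureTheory Set Filter Topology Metric

theorem hasDerivAt_setIntegral_of_continuousOn {α E : Type*} [TopologicalSpace α]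
    [MeasurableSpace α] [OpensMeasurableSpace α] [T2Space α] {μ : Measure α}
    [IsFiniteMeasureOnCompacts μ] [NormedAddCommGroup E] [NormedSpace ℝ E]
    [SecondCountableTopologyEither α E]
    {K : Set α} (hK : IsCompact K) {F F' : ℝ → α → E} {x₀ ε : ℝ} (hε : 0 < ε)
    (hF : ContinuousOn (fun z : ℝ × α => F z.1 z.2) (closedBall x₀ ε ×ˢ K))
    (hF' : ContinuousOn (fun z : ℝ × α => F' z.1 z.2) (closedBall x₀ ε ×ˢ K))
    (hdiff : ∀ x ∈ ball x₀ ε, ∀ a ∈ K, HasDerivAt (F · a) (F' x a) x) :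
    HasDerivAt (fun x => ∫ a in K, F x a ∂μ) (∫ a in K, F' x₀ a ∂μ) x₀ := by
  have slice : ∀ {G : ℝ → α → E},
      ContinuousOn (fun z : ℝ × α => G z.1 z.2) (closedBall x₀ ε ×ˢ K) →
      ∀ x ∈ closedBall x₀ ε, ContinuousOn (G x) K := fun hG x hx =>
    hG.comp (Continuous.prodMk_right x).continuousOn fun a ha => ⟨hx, ha⟩
  obtain ⟨M, hM⟩ := (isCompact_closedBall x₀ ε |>.prod hK).exists_bound_of_continuousOn hF'
  refine (hasDerivAt_integral_of_dominated_loc_of_deriv_le (bound := fun _ => M)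
    (ball_mem_nhds x₀ hε) ?_ ?_ ?_ ?_ (integrableOn_const hK.measure_ne_top) ?_).2
  · filter_upwards [ball_mem_nhds x₀ hε] with x hx
    exact (slice hF x (ball_subset_closedBall hx)).aestronglyMeasurable hK.measurableSet
  · exact (slice hF x₀ (mem_closedBall_self hε.le)).integrableOn_compact hK
  · exact (slice hF' x₀ (mem_closedBall_self hε.le)).aestronglyMeasurable hK.measurableSet
  · filter_upwards [ae_restrict_mem hK.measurableSet] with a ha x hx
    exact hM (x, a) ⟨ball_subset_closedBall hx, ha⟩
  · filter_upwards [ae_restrict_mem hK.measurableSet] with a ha x hx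
    exact hdiff x hx a ha

open ContinuousLinearMap in
theorem hasStrictFDerivAt_uncurry_of_hasDerivAt {E F : Type*} [NormedAddCommGroup E]
    [NormedSpace ℝ E] [NormedAddCommGroup F] [NormedSpace ℝ F] {f f₁ : ℝ → E → F}
    {f₂ : ℝ → E → E →L[ℝ] F} {v : ℝ × E}
    (df₁ : ∀ᶠ w in 𝓝 v, HasDerivAt (f · w.2) (f₁ w.1 w.2) w.1)
    (df₂ : ∀ᶠ w in 𝓝 v, HasFDerivAt (f w.1 ·) (f₂ w.1 w.2) w.2)
    (cf₁ : ContinuousAt ↿f₁ v) (cf₂ : ContinuousAt ↿f₂ v) :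
    HasStrictFDerivAt ↿f ((toSpanSingleton ℝ (f₁ v.1 v.2)).coprod (f₂ v.1 v.2)) v :=
  hasStrictFDerivAt_uncurry_coprod (f₁ := fun t x => toSpanSingleton ℝ (f₁ t x))
    (df₁.mono fun _ h => h.hasFDerivAt) df₂
    ((toSpanSingletonCLE (𝕜 := ℝ)).continuous.continuousAt.comp cf₁) cf₂

open ContinuousLinearMap in
theorem hasDerivAt_along_characteristic_of_continuous_partials {O : Set (ℝ × (ℝ × ℝ))}
    (hO : IsOpen O) {u ut ux uy : ℝ → ℝ × ℝ → ℝ}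
    (hut : ∀ z ∈ O, HasDerivAt (fun s => u s z.2) (ut z.1 z.2) z.1)
    (hux : ∀ z ∈ O, HasDerivAt (fun x => u z.1 (x, z.2.2)) (ux z.1 z.2) z.2.1)
    (huy : ∀ z ∈ O, HasDerivAt (fun y => u z.1 (z.2.1, y)) (uy z.1 z.2) z.2.2)
    (hut_cont : ContinuousOn (fun z : ℝ × (ℝ × ℝ) => ut z.1 z.2) O)
    (hux_cont : ContinuousOn (fun z : ℝ × (ℝ × ℝ) => ux z.1 z.2) O)
    (huy_cont : ContinuousOn (fun z : ℝ × (ℝ × ℝ) => uy z.1 z.2) O)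
    {s : ℝ} {q : ℝ × ℝ} (hsq : (s, q + (s, s)) ∈ O) :
    HasDerivAt (fun σ => u σ (q + (σ, σ)))
      (ut s (q + (s, s)) + ux s (q + (s, s)) + uy s (q + (s, s))) s := by
  set D : ℝ → ℝ × ℝ → ℝ × ℝ →L[ℝ] ℝ := fun t p =>
    (toSpanSingleton ℝ (ux t p)).coprod (toSpanSingleton ℝ (uy t p))
  have hD : ∀ z ∈ O, HasFDerivAt (u z.1 ·) (D z.1 z.2) z.2 := by
    intro z hz
    have hslice : {p : ℝ × ℝ | (z.1, p) ∈ O} ∈ 𝓝 z.2 :=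
      (hO.preimage (Continuous.prodMk_right z.1)).mem_nhds hz
    have hcont : ∀ {g : ℝ → ℝ × ℝ → ℝ}, ContinuousOn (fun w : ℝ × (ℝ × ℝ) => g w.1 w.2) O →
        ContinuousAt (fun p : ℝ × ℝ => g z.1 p) z.2 := fun {g} hg =>
      ContinuousAt.comp (f := fun p : ℝ × ℝ => (z.1, p)) (x := z.2)
        (hg.continuousAt (hO.mem_nhds hz)) (Continuous.prodMk_right z.1).continuousAt
    exact (hasStrictFDerivAt_uncurry_of_hasDerivAt (f := fun x y => u z.1 (x, y))
      (f₁ := fun x y => ux z.1 (x, y)) (f₂ := fun x y => toSpanSingleton ℝ (uy z.1 (x, y)))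
      (Filter.mem_of_superset hslice fun p hp => hux (z.1, p) hp)
      (Filter.mem_of_superset hslice fun p hp => (huy (z.1, p) hp).hasFDerivAt)
      (hcont hux_cont)
      ((toSpanSingletonCLE (𝕜 := ℝ)).continuous.continuousAt.comp (hcont huy_cont))).hasFDerivAt
  have hD_cont : ContinuousOn ↿D O :=
    (coprodEquivL ℝ).continuous.comp_continuousOn
      (((toSpanSingletonCLE (𝕜 := ℝ)).continuous.comp_continuousOn hux_cont).prodMk
        ((toSpanSingletonCLE (𝕜 := ℝ)).continuous.comp_continuousOn huy_cont))
  have hfd := (hasStrictFDerivAt_uncurry_of_hasDerivAt (f := u) (f₁ := ut) (f₂ := D)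
    (Filter.mem_of_superset (hO.mem_nhds hsq) hut)
    (Filter.mem_of_superset (hO.mem_nhds hsq) hD)
    (hut_cont.continuousAt (hO.mem_nhds hsq))
    (hD_cont.continuousAt (hO.mem_nhds hsq))).hasFDerivAt
  have hγ : HasDerivAt (fun σ : ℝ => (σ, q + (σ, σ))) (1, (1, 1)) s :=
    (hasDerivAt_id s).prodMk ((hasDerivAt_id s).prodMk (hasDerivAt_id s) |>.const_add q)
  refine (hfd.comp_hasDerivAt s hγ).congr_deriv ?_
  simp [D, add_assoc]

theorem setIntegral_Icc_prod_Icc_add {E : Type*} [NormedAddCommGroup E] [NormedSpace ℝ E]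
    (f : ℝ × ℝ → E) (s a₁ b₁ a₂ b₂ : ℝ) :
    ∫ p in Icc (s + a₁) (s + b₁) ×ˢ Icc (s + a₂) (s + b₂), f p
      = ∫ q in Icc a₁ b₁ ×ˢ Icc a₂ b₂, f (q + (s, s)) := by
  have hpre : (· + (s, s)) ⁻¹' (Icc (s + a₁) (s + b₁) ×ˢ Icc (s + a₂) (s + b₂))
      = Icc a₁ b₁ ×ˢ Icc a₂ b₂ := by
    ext q
    simp only [mem_preimage, mem_prod, mem_Icc, Prod.fst_add, Prod.snd_add]
    constructor <;> intro h <;> refine ⟨⟨?_, ?_⟩, ?_, ?_⟩ <;> linarith [h.1.1, h.1.2, h.2.1, h.2.2]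
  rw [← hpre, (measurePreserving_add_right volume (s, s)).setIntegral_preimage_emb
    (measurableEmbedding_addRight (s, s))]

theorem hasDerivAt_setIntegral_translating_rectangle {T : ℝ} {w w' : ℝ → ℝ × ℝ → ℝ}
    (hw : ContinuousOn (fun z : ℝ × (ℝ × ℝ) => w z.1 z.2) (Icc 0 T ×ˢ (Ici 0 ×ˢ Ici 0)))
    (hw' : ContinuousOn (fun z : ℝ × (ℝ × ℝ) => w' z.1 z.2) (Icc 0 T ×ˢ (Ici 0 ×ˢ Ici 0)))
    {a₁ b₁ a₂ b₂ : ℝ} (ha₁ : 0 ≤ a₁) (ha₂ : 0 ≤ a₂)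
    (hchar : ∀ s ∈ Ioo 0 T, ∀ q ∈ Icc a₁ b₁ ×ˢ Icc a₂ b₂,
      HasDerivAt (fun σ => w σ (q + (σ, σ))) (w' s (q + (s, s))) s)
    {t : ℝ} (ht : t ∈ Ioo 0 T) :
    HasDerivAt (fun s => ∫ p in Icc (s + a₁) (s + b₁) ×ˢ Icc (s + a₂) (s + b₂), w s p)
      (∫ p in Icc (t + a₁) (t + b₁) ×ˢ Icc (t + a₂) (t + b₂), w' t p) t := by
  obtain ⟨ε, hε, hεT⟩ := nhds_basis_closedBall.mem_iff.1 (isOpen_Ioo.mem_nhds ht)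
  have hK : IsCompact (Icc a₁ b₁ ×ˢ Icc a₂ b₂) := isCompact_Icc.prod isCompact_Icc
  have htranslate : ∀ {g : ℝ → ℝ × ℝ → ℝ},
      ContinuousOn (fun z : ℝ × (ℝ × ℝ) => g z.1 z.2) (Icc 0 T ×ˢ (Ici 0 ×ˢ Ici 0)) →
      ContinuousOn (fun z : ℝ × (ℝ × ℝ) => g z.1 (z.2 + (z.1, z.1)))
        (closedBall t ε ×ˢ (Icc a₁ b₁ ×ˢ Icc a₂ b₂)) := by
    intro g hg
    refine hg.comp (f := fun z : ℝ × (ℝ × ℝ) => (z.1, z.2 + (z.1, z.1))) (by fun_prop)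
      fun z ⟨hs, ⟨hx, _⟩, hy, _⟩ => ?_
    obtain ⟨hs₀, hsT⟩ := hεT hs
    exact ⟨⟨hs₀.le, hsT.le⟩, by simp only [mem_Ici, Prod.fst_add]; linarith,
      by simp only [mem_Ici, Prod.snd_add]; linarith⟩
  simp only [setIntegral_Icc_prod_Icc_add]
  exact hasDerivAt_setIntegral_of_continuousOn hK hε (htranslate hw) (htranslate hw')
    fun s hs q hq => hchar s (hεT (ball_subset_closedBall hs)) q hq

section Solution

variable {T : ℝ} {u ut ux uy c 𝒯 : ℝ → ℝ × ℝ → ℝ}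

theorem hasDerivAt_along_characteristic_of_pde
    (hut : ∀ t ∈ Icc (0:ℝ) T, ∀ p ∈ Ici (0:ℝ) ×ˢ Ici (0:ℝ),
      HasDerivAt (fun s => u s p) (ut t p) t)
    (hux : ∀ t ∈ Icc (0:ℝ) T, ∀ p ∈ Ici (0:ℝ) ×ˢ Ici (0:ℝ),
      HasDerivAt (fun x => u t (x, p.2)) (ux t p) p.1)
    (huy : ∀ t ∈ Icc (0:ℝ) T, ∀ p ∈ Ici (0:ℝ) ×ˢ Ici (0:ℝ),
      HasDerivAt (fun y => u t (p.1, y)) (uy t p) p.2)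
    (hut_cont : ContinuousOn (fun z : ℝ × (ℝ × ℝ) => ut z.1 z.2) (Icc 0 T ×ˢ (Ici 0 ×ˢ Ici 0)))
    (hux_cont : ContinuousOn (fun z : ℝ × (ℝ × ℝ) => ux z.1 z.2) (Icc 0 T ×ˢ (Ici 0 ×ˢ Ici 0)))
    (huy_cont : ContinuousOn (fun z : ℝ × (ℝ × ℝ) => uy z.1 z.2) (Icc 0 T ×ˢ (Ici 0 ×ˢ Ici 0)))
    (hpde : ∀ t ∈ Icc (0:ℝ) T, ∀ p ∈ Ici (0:ℝ) ×ˢ Ici (0:ℝ),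
      ut t p + ux t p + uy t p + c t p * u t p = 𝒯 t p)
    {s : ℝ} (hs : s ∈ Ioo 0 T) {q : ℝ × ℝ} (hq : q ∈ Ici 0 ×ˢ Ici 0) :
    HasDerivAt (fun σ => u σ (q + (σ, σ)))
      (𝒯 s (q + (s, s)) - c s (q + (s, s)) * u s (q + (s, s))) s := by
  have hOD : Ioo 0 T ×ˢ (Ioi 0 ×ˢ Ioi 0) ⊆ Icc 0 T ×ˢ (Ici (0:ℝ) ×ˢ Ici (0:ℝ)) :=
    prod_mono Ioo_subset_Icc_self (prod_mono Ioi_subset_Ici_self Ioi_subset_Ici_self)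
  have hsq : (s, q + (s, s)) ∈ Ioo 0 T ×ˢ (Ioi 0 ×ˢ Ioi (0:ℝ)) := by
    refine ⟨hs, ?_, ?_⟩ <;> simp only [mem_Ioi, Prod.fst_add, Prod.snd_add]
    · linarith [mem_Ici.1 hq.1, hs.1]
    · linarith [mem_Ici.1 hq.2, hs.1]
  have hchar := hasDerivAt_along_characteristic_of_continuous_partials
    (isOpen_Ioo.prod (isOpen_Ioi.prod isOpen_Ioi))
    (fun z hz => hut z.1 (hOD hz).1 z.2 (hOD hz).2)
    (fun z hz => hux z.1 (hOD hz).1 z.2 (hOD hz).2)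
    (fun z hz => huy z.1 (hOD hz).1 z.2 (hOD hz).2)
    (hut_cont.mono hOD) (hux_cont.mono hOD) (huy_cont.mono hOD) hsq
  refine hchar.congr_deriv ?_
  linarith [hpde s (hOD hsq).1 _ (hOD hsq).2]

theorem hasDerivAt_cohort_moment
    (hut : ∀ t ∈ Icc (0:ℝ) T, ∀ p ∈ Ici (0:ℝ) ×ˢ Ici (0:ℝ),
      HasDerivAt (fun s => u s p) (ut t p) t)
    (hux : ∀ t ∈ Icc (0:ℝ) T, ∀ p ∈ Ici (0:ℝ) ×ˢ Ici (0:ℝ),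
      HasDerivAt (fun x => u t (x, p.2)) (ux t p) p.1)
    (huy : ∀ t ∈ Icc (0:ℝ) T, ∀ p ∈ Ici (0:ℝ) ×ˢ Ici (0:ℝ),
      HasDerivAt (fun y => u t (p.1, y)) (uy t p) p.2)
    (hu_cont : ContinuousOn (fun z : ℝ × (ℝ × ℝ) => u z.1 z.2) (Icc 0 T ×ˢ (Ici 0 ×ˢ Ici 0)))
    (hut_cont : ContinuousOn (fun z : ℝ × (ℝ × ℝ) => ut z.1 z.2) (Icc 0 T ×ˢ (Ici 0 ×ˢ Ici 0)))
    (hux_cont : ContinuousOn (fun z : ℝ × (ℝ × ℝ) => ux z.1 z.2) (Icc 0 T ×ˢ (Ici 0 ×ˢ Ici 0)))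
    (huy_cont : ContinuousOn (fun z : ℝ × (ℝ × ℝ) => uy z.1 z.2) (Icc 0 T ×ˢ (Ici 0 ×ˢ Ici 0)))
    (hc_cont : ContinuousOn (fun z : ℝ × (ℝ × ℝ) => c z.1 z.2) (Icc 0 T ×ˢ (Ici 0 ×ˢ Ici 0)))
    (h𝒯_cont : ContinuousOn (fun z : ℝ × (ℝ × ℝ) => 𝒯 z.1 z.2) (Icc 0 T ×ˢ (Ici 0 ×ˢ Ici 0)))
    (hpde : ∀ t ∈ Icc (0:ℝ) T, ∀ p ∈ Ici (0:ℝ) ×ˢ Ici (0:ℝ),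
      ut t p + ux t p + uy t p + c t p * u t p = 𝒯 t p)
    {φ : ℝ × ℝ → ℝ} (hφ : Continuous φ) (hφ_diag : ∀ p s, φ (p + (s, s)) = φ p + s)
    {a₁ b₁ a₂ b₂ : ℝ} (ha₁ : 0 ≤ a₁) (ha₂ : 0 ≤ a₂) {t : ℝ} (ht : t ∈ Ioo 0 T) :
    HasDerivAt (fun s => ∫ p in Icc (s + a₁) (s + b₁) ×ˢ Icc (s + a₂) (s + b₂), φ p * u s p)
      ((∫ p in Icc (t + a₁) (t + b₁) ×ˢ Icc (t + a₂) (t + b₂), φ p * (𝒯 t p - c t p * u t p))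
        + ∫ p in Icc (t + a₁) (t + b₁) ×ˢ Icc (t + a₂) (t + b₂), u t p) t := by
  have hφ_cont : ContinuousOn (fun z : ℝ × (ℝ × ℝ) => φ z.2) (Icc 0 T ×ˢ (Ici 0 ×ˢ Ici 0)) :=
    (hφ.comp continuous_snd).continuousOn
  have hsource_cont : ContinuousOn (fun z : ℝ × (ℝ × ℝ) =>
      φ z.2 * (𝒯 z.1 z.2 - c z.1 z.2 * u z.1 z.2)) (Icc 0 T ×ˢ (Ici 0 ×ˢ Ici 0)) :=
    hφ_cont.mul (h𝒯_cont.sub (hc_cont.mul hu_cont))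
  have hintegrable : ∀ {g : ℝ → ℝ × ℝ → ℝ},
      ContinuousOn (fun z : ℝ × (ℝ × ℝ) => g z.1 z.2) (Icc 0 T ×ˢ (Ici 0 ×ˢ Ici 0)) →
      IntegrableOn (g t) (Icc (t + a₁) (t + b₁) ×ˢ Icc (t + a₂) (t + b₂)) := by
    intro g hg
    refine (hg.comp (Continuous.prodMk_right t).continuousOn fun p hp => ?_
      ).integrableOn_compact (isCompact_Icc.prod isCompact_Icc)
    obtain ⟨⟨hx, _⟩, hy, _⟩ := hp
    exact ⟨Ioo_subset_Icc_self ht, by simp only [mem_Ici]; linarith [ht.1],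
      by simp only [mem_Ici]; linarith [ht.1]⟩
  rw [← integral_add (hintegrable (g := fun s p => φ p * (𝒯 s p - c s p * u s p)) hsource_cont)
    (hintegrable hu_cont)]
  refine hasDerivAt_setIntegral_translating_rectangle (w := fun s p => φ p * u s p)
    (w' := fun s p => φ p * (𝒯 s p - c s p * u s p) + u s p) (hφ_cont.mul hu_cont)
    (hsource_cont.add hu_cont) ha₁ ha₂ (fun s hs q hq => ?_) ht
  have hφ_line : HasDerivAt (fun σ => φ (q + (σ, σ))) 1 s := by
    simp only [hφ_diag]
    exact (hasDerivAt_id s).const_add _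
  have hq₀ : q ∈ Ici 0 ×ˢ Ici 0 := ⟨ha₁.trans hq.1.1, ha₂.trans hq.2.1⟩
  refine (hφ_line.mul (hasDerivAt_along_characteristic_of_pde hut hux huy hut_cont
    hux_cont huy_cont hpde hs hq₀)).congr_deriv ?_
  ring

end Solution

theorem ebt_couple_cohort_first_moment_derivative_general
    (T : ℝ)
    (u ut ux uy : ℝ → ℝ × ℝ → ℝ) (c 𝒯 : ℝ → ℝ × ℝ → ℝ)
    (hut : ∀ t ∈ Icc (0:ℝ) T, ∀ p ∈ Ici (0:ℝ) ×ˢ Ici (0:ℝ),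
      HasDerivAt (fun s => u s p) (ut t p) t)
    (hux : ∀ t ∈ Icc (0:ℝ) T, ∀ p ∈ Ici (0:ℝ) ×ˢ Ici (0:ℝ),
      HasDerivAt (fun x => u t (x, p.2)) (ux t p) p.1)
    (huy : ∀ t ∈ Icc (0:ℝ) T, ∀ p ∈ Ici (0:ℝ) ×ˢ Ici (0:ℝ),
      HasDerivAt (fun y => u t (p.1, y)) (uy t p) p.2)
    (hu_cont : ContinuousOn (fun q : ℝ × (ℝ × ℝ) => u q.1 q.2) (Icc 0 T ×ˢ (Ici 0 ×ˢ Ici 0)))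
    (hut_cont : ContinuousOn (fun q : ℝ × (ℝ × ℝ) => ut q.1 q.2) (Icc 0 T ×ˢ (Ici 0 ×ˢ Ici 0)))
    (hux_cont : ContinuousOn (fun q : ℝ × (ℝ × ℝ) => ux q.1 q.2) (Icc 0 T ×ˢ (Ici 0 ×ˢ Ici 0)))
    (huy_cont : ContinuousOn (fun q : ℝ × (ℝ × ℝ) => uy q.1 q.2) (Icc 0 T ×ˢ (Ici 0 ×ˢ Ici 0)))
    (hc_cont : ContinuousOn (fun q : ℝ × (ℝ × ℝ) => c q.1 q.2) (Icc 0 T ×ˢ (Ici 0 ×ˢ Ici 0)))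
    (h𝒯_cont : ContinuousOn (fun q : ℝ × (ℝ × ℝ) => 𝒯 q.1 q.2) (Icc 0 T ×ˢ (Ici 0 ×ˢ Ici 0)))
    (hpde : ∀ t ∈ Icc (0:ℝ) T, ∀ p ∈ Ici (0:ℝ) ×ˢ Ici (0:ℝ),
      ut t p + ux t p + uy t p + c t p * u t p = 𝒯 t p)
    (a₁ b₁ a₂ b₂ : ℝ) (ha₁ : 0 ≤ a₁) (ha₂ : 0 ≤ a₂)
    (mc xbar ybar : ℝ → ℝ)
    (hmc : ∀ s, mc s = ∫ p in Icc (s + a₁) (s + b₁) ×ˢ Icc (s + a₂) (s + b₂), u s p)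
    (hxbar : ∀ s, xbar s = ∫ p in Icc (s + a₁) (s + b₁) ×ˢ Icc (s + a₂) (s + b₂), p.1 * u s p)
    (hybar : ∀ s, ybar s = ∫ p in Icc (s + a₁) (s + b₁) ×ˢ Icc (s + a₂) (s + b₂), p.2 * u s p) :
    ∀ t ∈ Ioo (0:ℝ) T,
      HasDerivAt xbar
        ((∫ p in Icc (t + a₁) (t + b₁) ×ˢ Icc (t + a₂) (t + b₂),
            p.1 * (𝒯 t p - c t p * u t p)) + mc t) t ∧
      HasDerivAt ybar
        ((∫ p in Icc (t + a₁) (t + b₁) ×ˢ Icc (t + a₂) (t + b₂),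
            p.2 * (𝒯 t p - c t p * u t p)) + mc t) t := by
  intro t ht
  have hmoment {φ : ℝ × ℝ → ℝ} (hφ : Continuous φ) (hφ_diag : ∀ p s, φ (p + (s, s)) = φ p + s) :=
    hasDerivAt_cohort_moment hut hux huy hu_cont hut_cont hux_cont huy_cont hc_cont h𝒯_cont hpde
      hφ hφ_diag (b₁ := b₁) (b₂ := b₂) ha₁ ha₂ ht
  rw [funext hxbar, funext hybar, hmc]
  exact ⟨hmoment continuous_fst fun _ _ => rfl, hmoment continuous_snd fun _ _ => rfl⟩

/-- For a nonnegative `C¹` solution of the couples equation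
`∂ₜu꜀ + ∂ₓu꜀ + ∂_y u꜀ + c꜀ u꜀ = 𝒯`, the first-moment vector of a rectangular
cohort moving with unit speed satisfies
`(d/dt)(x̄꜀ᵢⱼ, ȳ꜀ᵢⱼ)(t) = ∬_{Ω꜀ᵢⱼ(t)} (x,y) (𝒯 − c꜀ u꜀) dx dy + (1,1) m꜀ᵢⱼ(t)`. -/
theorem ebt_couple_cohort_first_moment_derivative
    (T : ℝ) (hT : 0 < T)
    (u ut ux uy : ℝ → ℝ × ℝ → ℝ) (c 𝒯 : ℝ → ℝ × ℝ → ℝ)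
    (hu_nonneg : ∀ t ∈ Icc (0:ℝ) T, ∀ p ∈ Ici (0:ℝ) ×ˢ Ici (0:ℝ), 0 ≤ u t p)
    (hut : ∀ t ∈ Icc (0:ℝ) T, ∀ p ∈ Ici (0:ℝ) ×ˢ Ici (0:ℝ),
      HasDerivAt (fun s => u s p) (ut t p) t)
    (hux : ∀ t ∈ Icc (0:ℝ) T, ∀ p ∈ Ici (0:ℝ) ×ˢ Ici (0:ℝ),
      HasDerivAt (fun x => u t (x, p.2)) (ux t p) p.1)
    (huy : ∀ t ∈ Icc (0:ℝ) T, ∀ p ∈ Ici (0:ℝ) ×ˢ Ici (0:ℝ),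
      HasDerivAt (fun y => u t (p.1, y)) (uy t p) p.2)
    (hu_cont : ContinuousOn (fun q : ℝ × (ℝ × ℝ) => u q.1 q.2) (Icc 0 T ×ˢ (Ici 0 ×ˢ Ici 0)))
    (hut_cont : ContinuousOn (fun q : ℝ × (ℝ × ℝ) => ut q.1 q.2) (Icc 0 T ×ˢ (Ici 0 ×ˢ Ici 0)))
    (hux_cont : ContinuousOn (fun q : ℝ × (ℝ × ℝ) => ux q.1 q.2) (Icc 0 T ×ˢ (Ici 0 ×ˢ Ici 0)))
    (huy_cont : ContinuousOn (fun q : ℝ × (ℝ × ℝ) => uy q.1 q.2) (Icc 0 T ×ˢ (Ici 0 ×ˢ Ici 0)))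
    (hc_cont : ContinuousOn (fun q : ℝ × (ℝ × ℝ) => c q.1 q.2) (Icc 0 T ×ˢ (Ici 0 ×ˢ Ici 0)))
    (h𝒯_cont : ContinuousOn (fun q : ℝ × (ℝ × ℝ) => 𝒯 q.1 q.2) (Icc 0 T ×ˢ (Ici 0 ×ˢ Ici 0)))
    (hpde : ∀ t ∈ Icc (0:ℝ) T, ∀ p ∈ Ici (0:ℝ) ×ˢ Ici (0:ℝ),
      ut t p + ux t p + uy t p + c t p * u t p = 𝒯 t p)
    (a₁ b₁ a₂ b₂ : ℝ) (ha₁ : 0 ≤ a₁) (h₁ : a₁ < b₁) (ha₂ : 0 ≤ a₂) (h₂ : a₂ < b₂)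
    (mc xbar ybar : ℝ → ℝ)
    (hmc : ∀ s, mc s = ∫ p in Icc (s + a₁) (s + b₁) ×ˢ Icc (s + a₂) (s + b₂), u s p)
    (hxbar : ∀ s, xbar s = ∫ p in Icc (s + a₁) (s + b₁) ×ˢ Icc (s + a₂) (s + b₂), p.1 * u s p)
    (hybar : ∀ s, ybar s = ∫ p in Icc (s + a₁) (s + b₁) ×ˢ Icc (s + a₂) (s + b₂), p.2 * u s p) :
    ∀ t ∈ Ioo (0:ℝ) T,
      HasDerivAt xbar
        ((∫ p in Icc (t + a₁) (t + b₁) ×ˢ Icc (t + a₂) (t + b₂),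
            p.1 * (𝒯 t p - c t p * u t p)) + mc t) t ∧
      HasDerivAt ybar
        ((∫ p in Icc (t + a₁) (t + b₁) ×ˢ Icc (t + a₂) (t + b₂),
            p.2 * (𝒯 t p - c t p * u t p)) + mc t) t :=
  ebt_couple_cohort_first_moment_derivative_general T u ut ux uy c 𝒯 hut hux huy hu_cont hut_cont
    hux_cont huy_cont hc_cont h𝒯_cont hpde a₁ b₁ a₂ b₂ ha₁ ha₂ mc xbar ybar hmc hxbar hybar
end

section
/- Let u ∈ C¹([0,T]×ℝ₊) be nonnegative and satisfy ∂_t u + ∂_x u + c u = 0, where c(t,·) ∈ C²(ℝ₊) with |∂²_x c(t,x)| ≤ K for all t,x. Let Ω_i(t) = [l_{i−1}(t), l_i(t)) be a cohort with l(t) = t + l(0) and 0 ≤ l_{i−1}(0) < l_i(0), with mass m_i(t) := ∫_{Ω_i(t)} u(t,x) dx > 0 and location x_i(t) := (1/m_i(t))∫_{Ω_i(t)} x u(t,x) dx. Then for every t: |(d/dt) m_i(t) + c(t, x_i(t)) m_i(t)| ≤ (K/2) · ‖u(t,·)‖_{L¹(Ω_i(t))} · max_{x∈Ω_i(t)} |x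 − x_i(t)|². -/
open MeasureTheory Set intervalIntegral
open scoped Topology

/-! Along the characteristics the cohort is a translate of a fixed interval, so Leibniz's rule and
the PDE give `m' = -∫_Ω c u`. As `xᵢ` is the centroid of `u` on `Ω`, the first moment
`∫_Ω (x - xᵢ) u` vanishes, hence `m' + c(xᵢ) m = -∫_Ω R u` with `R` the first-order Taylor
remainder of `c` at `xᵢ`, and Lagrange's form of `R` gives `|R x| ≤ K / 2 * (x - xᵢ) ^ 2`. -/

theorem exists_ratio_hasDerivAt_eq_ratio_slope_uIoo {f f' g g' : ℝ → ℝ} {a b : ℝ} (hab : a ≠ b)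
    (hfc : ContinuousOn f (uIcc a b)) (hff' : ∀ x ∈ uIoo a b, HasDerivAt f (f' x) x)
    (hgc : ContinuousOn g (uIcc a b)) (hgg' : ∀ x ∈ uIoo a b, HasDerivAt g (g' x) x) :
    ∃ c ∈ uIoo a b, (g b - g a) * f' c = (f b - f a) * g' c := by
  rcases hab.lt_or_gt with h | h
  · rw [uIcc_of_le h.le] at hfc hgc
    rw [uIoo_of_le h.le] at hff' hgg' ⊢
    exact exists_ratio_hasDerivAt_eq_ratio_slope f f' h hfc hff' g g' hgc hgg'
  · rw [uIcc_of_ge h.le] at hfc hgc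
    rw [uIoo_of_ge h.le] at hff' hgg' ⊢
    obtain ⟨c, hc, hslope⟩ := exists_ratio_hasDerivAt_eq_ratio_slope f f' h hfc hff' g g' hgc hgg'
    exact ⟨c, hc, by linarith⟩

theorem taylor_mean_remainder_lagrange_of_hasDerivAt {f f' f'' : ℝ → ℝ} {x₀ x : ℝ}
    (hf : ∀ y ∈ uIcc x₀ x, HasDerivAt f (f' y) y)
    (hf' : ∀ y ∈ uIcc x₀ x, HasDerivAt f' (f'' y) y) :
    ∃ z ∈ uIcc x₀ x, f x - f x₀ - f' x₀ * (x - x₀) = f'' z / 2 * (x - x₀) ^ 2 := by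
  rcases eq_or_ne x₀ x with rfl | hne
  · exact ⟨x₀, left_mem_uIcc, by ring⟩
  -- Cauchy's mean value theorem against `(y - x₀) ^ 2`, then Lagrange's for `f'`
  obtain ⟨η, hη, hcauchy⟩ := exists_ratio_hasDerivAt_eq_ratio_slope_uIoo hne
    (f := fun y => f y - f x₀ - f' x₀ * (y - x₀)) (f' := fun y => f' y - f' x₀)
    (g := fun y => (y - x₀) ^ 2) (g' := fun y => 2 * (y - x₀))
    (fun y hy => (hf y hy).continuousAt.continuousWithinAt.sub continuousWithinAt_const |>.sub
      (by fun_prop))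
    (fun y hy => by
      simpa using ((hf y (Ioo_subset_Icc_self hy)).sub_const (f x₀)).fun_sub
        (((hasDerivAt_id' y).sub_const x₀).const_mul (f' x₀)))
    (by fun_prop)
    (fun y _ => by simpa using ((hasDerivAt_id' y).sub_const x₀).fun_pow 2)
  have hηx₀ : η - x₀ ≠ 0 := by
    rw [sub_ne_zero]
    rintro rfl
    rcases le_total η x with h | h <;> simp [uIoo, h] at hη
  have hsub : uIcc x₀ η ⊆ uIcc x₀ x := uIcc_subset_uIcc_left (Ioo_subset_Icc_self hη)
  obtain ⟨ζ, hζ, hlagrange⟩ := exists_ratio_hasDerivAt_eq_ratio_slope_uIoo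
    (sub_ne_zero.1 hηx₀).symm (f := f') (f' := f'') (g := id) (g' := fun _ => 1)
    (fun y hy => (hf' y (hsub hy)).continuousAt.continuousWithinAt)
    (fun y hy => hf' y (hsub (Ioo_subset_Icc_self hy))) continuousOn_id
    (fun y _ => hasDerivAt_id y)
  refine ⟨ζ, hsub (Ioo_subset_Icc_self hζ), mul_right_cancel₀ (mul_ne_zero two_ne_zero hηx₀) ?_⟩
  simp only [id, sub_self, mul_zero, sub_zero, ne_eq, OfNat.ofNat_ne_zero, not_false_eq_true,
    zero_pow] at hcauchy hlagrange
  linear_combination -hcauchy - (x - x₀) ^ 2 * hlagrange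

theorem abs_sub_sub_deriv_mul_le {f f' f'' : ℝ → ℝ} {x₀ x K : ℝ}
    (hf : ∀ y ∈ uIcc x₀ x, HasDerivAt f (f' y) y)
    (hf' : ∀ y ∈ uIcc x₀ x, HasDerivAt f' (f'' y) y) (hK : ∀ y ∈ uIcc x₀ x, |f'' y| ≤ K) :
    |f x - f x₀ - f' x₀ * (x - x₀)| ≤ K / 2 * (x - x₀) ^ 2 := by
  obtain ⟨z, hz, h⟩ := taylor_mean_remainder_lagrange_of_hasDerivAt hf hf'
  rw [h, abs_mul, abs_div, abs_two, abs_sq]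
  gcongr
  exact hK z hz

noncomputable def centroid (w : ℝ → ℝ) (a b : ℝ) : ℝ :=
  (∫ x in a..b, x * w x) / ∫ x in a..b, w x

section Centroid

variable {w : ℝ → ℝ} {a b : ℝ}

theorem centroid_mem_Icc (hab : a ≤ b) (hw : IntervalIntegrable w volume a b)
    (hw0 : ∀ x ∈ Icc a b, 0 ≤ w x) (hpos : 0 < ∫ x in a..b, w x) :
    centroid w a b ∈ Icc a b := by
  have hxw : IntervalIntegrable (fun x => x * w x) volume a b :=
    hw.continuousOn_mul continuousOn_id
  rw [centroid, mem_Icc, le_div_iff₀ hpos, div_le_iff₀ hpos,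
    ← intervalIntegral.integral_const_mul, ← intervalIntegral.integral_const_mul]
  constructor
  · exact integral_mono_on hab (hw.const_mul a) hxw fun x hx =>
      mul_le_mul_of_nonneg_right hx.1 (hw0 x hx)
  · exact integral_mono_on hab hxw (hw.const_mul b) fun x hx =>
      mul_le_mul_of_nonneg_right hx.2 (hw0 x hx)

theorem integral_sub_centroid_mul_eq_zero (hw : IntervalIntegrable w volume a b)
    (hne : ∫ x in a..b, w x ≠ 0) :
    ∫ x in a..b, (x - centroid w a b) * w x = 0 := by
  have hxw : IntervalIntegrable (fun x => x * w x) volume a b :=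
    hw.continuousOn_mul continuousOn_id
  simp_rw [sub_mul]
  rw [integral_sub hxw (hw.const_mul _), intervalIntegral.integral_const_mul,
    centroid, div_mul_cancel₀ _ hne, sub_self]

end Centroid

theorem IsCompact.le_biSup_of_continuousOn {X : Type*} [TopologicalSpace X] {f : X → ℝ}
    {s : Set X} (hs : IsCompact s) (hf : ContinuousOn f s) {x : X} (hx : x ∈ s) :
    f x ≤ ⨆ y ∈ s, f y :=
  le_ciSup₂ (f := fun y (_ : y ∈ s) => f y) ((hs.bddAbove_image hf).mono <| by
    rintro _ ⟨_, ⟨y, rfl⟩, ⟨hy, rfl⟩⟩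
    exact mem_image_of_mem f hy) x hx

theorem abs_integral_mul_sub_mul_integral_le {c c' c'' w : ℝ → ℝ} {a b ξ K S : ℝ} (hab : a ≤ b)
    (hc : ∀ x ∈ Icc a b, HasDerivAt c (c' x) x) (hc' : ∀ x ∈ Icc a b, HasDerivAt c' (c'' x) x)
    (hK : ∀ x ∈ Icc a b, |c'' x| ≤ K) (hw : IntervalIntegrable w volume a b) (hξ : ξ ∈ Icc a b)
    (hmoment : ∫ x in a..b, (x - ξ) * w x = 0) (hS : ∀ x ∈ Icc a b, (x - ξ) ^ 2 ≤ S) :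
    |(∫ x in a..b, c x * w x) - c ξ * ∫ x in a..b, w x| ≤
      K / 2 * (∫ x in a..b, |w x|) * S := by
  have hK0 : 0 ≤ K := (abs_nonneg _).trans (hK ξ hξ)
  have hcw : IntervalIntegrable (fun x => c x * w x) volume a b := by
    refine hw.continuousOn_mul fun x hx => (hc x ?_).continuousAt.continuousWithinAt
    rwa [uIcc_of_le hab] at hx
  -- the first-order Taylor term integrates to zero against `w`
  have hremainder : (∫ x in a..b, c x * w x) - c ξ * ∫ x in a..b, w x =
      ∫ x in a..b, (c x - c ξ - c' ξ * (x - ξ)) * w x := by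
    have hsplit : (fun x => (c x - c ξ - c' ξ * (x - ξ)) * w x) =
        fun x => (c x * w x - c ξ * w x) - c' ξ * ((x - ξ) * w x) := by
      funext x; ring
    have hxw : IntervalIntegrable (fun x => (x - ξ) * w x) volume a b :=
      hw.continuousOn_mul (continuousOn_id.sub continuousOn_const)
    rw [hsplit, integral_sub (hcw.sub (hw.const_mul _)) (hxw.const_mul _),
      integral_sub hcw (hw.const_mul _), intervalIntegral.integral_const_mul,
      intervalIntegral.integral_const_mul, hmoment, mul_zero, sub_zero]
  rw [hremainder, ← Real.norm_eq_abs]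
  calc ‖∫ x in a..b, (c x - c ξ - c' ξ * (x - ξ)) * w x‖
      ≤ ∫ x in a..b, K / 2 * S * |w x| := by
        refine norm_integral_le_of_norm_le hab (ae_of_all _ fun x hx => ?_) (hw.abs.const_mul _)
        have hx : x ∈ Icc a b := Ioc_subset_Icc_self hx
        have hsub : uIcc ξ x ⊆ Icc a b := uIcc_subset_Icc hξ hx
        rw [Real.norm_eq_abs, abs_mul]
        gcongr
        calc |c x - c ξ - c' ξ * (x - ξ)| ≤ K / 2 * (x - ξ) ^ 2 :=
              abs_sub_sub_deriv_mul_le (fun y hy => hc y (hsub hy)) (fun y hy => hc' y (hsub hy))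
                fun y hy => hK y (hsub hy)
          _ ≤ K / 2 * S := by gcongr; exact hS x hx
    _ = K / 2 * (∫ x in a..b, |w x|) * S := by rw [intervalIntegral.integral_const_mul]; ring

theorem abs_integral_mul_sub_centroid_mul_integral_le {c c' c'' w : ℝ → ℝ} {a b K : ℝ}
    (hab : a ≤ b) (hc : ∀ x ∈ Icc a b, HasDerivAt c (c' x) x)
    (hc' : ∀ x ∈ Icc a b, HasDerivAt c' (c'' x) x) (hK : ∀ x ∈ Icc a b, |c'' x| ≤ K)
    (hw : IntervalIntegrable w volume a b) (hw0 : ∀ x ∈ Icc a b, 0 ≤ w x)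
    (hpos : 0 < ∫ x in a..b, w x) :
    |(∫ x in a..b, c x * w x) - c (centroid w a b) * ∫ x in a..b, w x| ≤
      K / 2 * (∫ x in a..b, |w x|) * ⨆ x ∈ Icc a b, |x - centroid w a b| ^ 2 :=
  abs_integral_mul_sub_mul_integral_le hab hc hc' hK hw (centroid_mem_Icc hab hw hw0 hpos)
    (integral_sub_centroid_mul_eq_zero hw hpos.ne') fun x hx => by
      rw [← sq_abs]
      exact isCompact_Icc.le_biSup_of_continuousOn (f := fun x => |x - centroid w a b| ^ 2)
        (by fun_prop) hx

theorem hasDerivAt_along_characteristic {u ux : ℝ → ℝ → ℝ} {s y a : ℝ}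
    (hut : HasDerivAt (fun r => u r (y + s)) a s)
    (hux : ∀ᶠ p in 𝓝 (s, y + s), HasDerivAt (u p.1) (ux p.1 p.2) p.2)
    (hcont : ContinuousAt (Function.uncurry ux) (s, y + s)) :
    HasDerivAt (fun r => u r (y + r)) (a + ux s (y + s)) s := by
  suffices hshift : HasDerivAt (fun r => u r (y + r) - u r (y + s)) (ux s (y + s)) s by
    simpa using hut.fun_add hshift
  rw [hasDerivAt_iff_isLittleO, Asymptotics.isLittleO_iff]
  intro ε hε
  obtain ⟨δ, hδ, hnear⟩ := Metric.eventually_nhds_iff.1 <|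
    hux.and (hcont.eventually (Metric.closedBall_mem_nhds (ux s (y + s)) hε))
  filter_upwards [Metric.ball_mem_nhds s hδ] with r hr
  have hmem : ∀ z ∈ Metric.ball (y + s) δ, dist (r, z) (s, y + s) < δ := fun z hz =>
    by rw [Prod.dist_eq]; exact max_lt hr hz
  have hmvt := (convex_ball (y + s) δ).norm_image_sub_le_of_norm_hasDerivWithin_le
    (f := fun z => u r z - ux s (y + s) * z) (f' := fun z => ux r z - ux s (y + s))
    (fun z hz => ((hnear (hmem z hz)).1.sub
      ((hasDerivAt_id' z).const_mul (ux s (y + s)) |>.congr_deriv (mul_one _))).hasDerivWithinAt)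
    (fun z hz => by simpa [dist_eq_norm] using (hnear (hmem z hz)).2)
    (Metric.mem_ball_self hδ) (y := y + r) (by simpa [Real.dist_eq] using hr)
  convert hmvt using 2
  · simp only [sub_self, smul_eq_mul]; ring
  · simp

theorem hasDerivAt_integral_transport {u ut ux : ℝ → ℝ → ℝ} {U : Set (ℝ × ℝ)} {t a b : ℝ}
    (hU : IsOpen U) (hut : ∀ p ∈ U, HasDerivAt (fun s => u s p.2) (ut p.1 p.2) p.1)
    (hux : ∀ p ∈ U, HasDerivAt (u p.1) (ux p.1 p.2) p.2)
    (hut_cont : ContinuousOn (Function.uncurry ut) U)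
    (hux_cont : ContinuousOn (Function.uncurry ux) U)
    (hseg : ∀ x ∈ uIcc (t + a) (t + b), (t, x) ∈ U) :
    HasDerivAt (fun s => ∫ x in (s + a)..(s + b), u s x)
      (∫ x in (t + a)..(t + b), (ut t x + ux t x)) t := by
  have hshift : ∀ (f : ℝ → ℝ) s, ∫ x in (s + a)..(s + b), f x = ∫ y in a..b, f (y + s) := by
    intro f s
    rw [intervalIntegral.integral_comp_add_right, add_comm a, add_comm b]
  simp only [hshift]
  set K₀ := (fun y => (t, y + t)) '' uIcc a b
  have hK₀U : K₀ ⊆ U := by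
    rintro _ ⟨y, hy, rfl⟩
    have hyt : y + t ∈ uIcc (a + t) (b + t) :=
      image_add_const_uIcc t a b ▸ mem_image_of_mem _ hy
    rw [add_comm a, add_comm b] at hyt
    exact hseg _ hyt
  have hK₀ : IsCompact K₀ := isCompact_uIcc.image (by fun_prop)
  obtain ⟨δ, hδ, hδU⟩ := hK₀.exists_cthickening_subset_open hU hK₀U
  have hnear : ∀ s ∈ Metric.ball t δ, ∀ y ∈ uIcc a b, (s, y + s) ∈ Metric.cthickening δ K₀ := by
    intro s hs y hy
    refine Metric.mem_cthickening_of_dist_le _ (t, y + t) δ K₀ ⟨y, hy, rfl⟩ ?_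
    rw [Metric.mem_ball, Real.dist_eq] at hs
    simp only [Prod.dist_eq, Real.dist_eq, add_sub_add_left_eq_sub, max_self]
    exact hs.le
  obtain ⟨C₁, hC₁⟩ := hK₀.cthickening.exists_bound_of_continuousOn (hut_cont.mono hδU)
  obtain ⟨C₂, hC₂⟩ := hK₀.cthickening.exists_bound_of_continuousOn (hux_cont.mono hδU)
  have hcont : ∀ s ∈ Metric.ball t δ, ContinuousOn (fun y => u s (y + s)) (uIcc a b) :=
    fun s hs y hy => ContinuousAt.continuousWithinAt <| ContinuousAt.comp (g := u s)
      (hux _ (hδU (hnear s hs y hy))).continuousAt (continuous_add_const s).continuousAt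
  refine (hasDerivAt_integral_of_dominated_loc_of_deriv_le
    (F' := fun s y => ut s (y + s) + ux s (y + s)) (bound := fun _ => C₁ + C₂)
    (Metric.ball_mem_nhds t hδ) ?_ (hcont t (Metric.mem_ball_self hδ)).intervalIntegrable ?_ ?_
    intervalIntegrable_const ?_).2
  · filter_upwards [Metric.ball_mem_nhds t hδ] with s hs
    exact ((hcont s hs).mono uIoc_subset_uIcc).aestronglyMeasurable measurableSet_uIoc
  · have hmaps : MapsTo (fun y => (t, y + t)) (uIoc a b) U :=
      fun y hy => hK₀U ⟨y, uIoc_subset_uIcc hy, rfl⟩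
    exact ((hut_cont.comp (by fun_prop) hmaps).add
      (hux_cont.comp (by fun_prop) hmaps)).aestronglyMeasurable measurableSet_uIoc
  · refine ae_of_all _ fun y hy s hs => (norm_add_le _ _).trans (add_le_add ?_ ?_)
    · exact hC₁ _ (hnear s hs y (uIoc_subset_uIcc hy))
    · exact hC₂ _ (hnear s hs y (uIoc_subset_uIcc hy))
  · refine ae_of_all _ fun y hy s hs => ?_
    have hp : (s, y + s) ∈ U := hδU (hnear s hs y (uIoc_subset_uIcc hy))
    exact hasDerivAt_along_characteristic (hut _ hp)
      (Filter.eventually_of_mem (hU.mem_nhds hp) hux) (hux_cont.continuousAt (hU.mem_nhds hp))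

theorem ebt_closed_form_mass_equation_error_general
    (T : ℝ)
    (u ut ux : ℝ → ℝ → ℝ) (c cx cxx : ℝ → ℝ → ℝ) (K : ℝ)
    (hu_nonneg : ∀ t ∈ Icc (0:ℝ) T, ∀ x ∈ Ici (0:ℝ), 0 ≤ u t x)
    (hut : ∀ t ∈ Icc (0:ℝ) T, ∀ x ∈ Ici (0:ℝ), HasDerivAt (fun s => u s x) (ut t x) t)
    (hux : ∀ t ∈ Icc (0:ℝ) T, ∀ x ∈ Ici (0:ℝ), HasDerivAt (fun y => u t y) (ux t x) x)
    (hut_cont : ContinuousOn (fun p : ℝ × ℝ => ut p.1 p.2) (Icc 0 T ×ˢ Ici 0))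
    (hux_cont : ContinuousOn (fun p : ℝ × ℝ => ux p.1 p.2) (Icc 0 T ×ˢ Ici 0))
    (hcx : ∀ t ∈ Icc (0:ℝ) T, ∀ x ∈ Ici (0:ℝ), HasDerivAt (c t) (cx t x) x)
    (hcxx : ∀ t ∈ Icc (0:ℝ) T, ∀ x ∈ Ici (0:ℝ), HasDerivAt (cx t) (cxx t x) x)
    (hK : ∀ t ∈ Icc (0:ℝ) T, ∀ x ∈ Ici (0:ℝ), |cxx t x| ≤ K)
    (hpde : ∀ t ∈ Icc (0:ℝ) T, ∀ x ∈ Ici (0:ℝ), ut t x + ux t x + c t x * u t x = 0)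
    (l₀ l₁ : ℝ) (hl₀ : 0 ≤ l₀) (hl : l₀ < l₁)
    (mi xi : ℝ → ℝ)
    (hmi : ∀ s, mi s = ∫ x in (s + l₀)..(s + l₁), u s x)
    (hmi_pos : ∀ t ∈ Icc (0:ℝ) T, 0 < mi t)
    (hxi : ∀ s, xi s = (1 / mi s) * ∫ x in (s + l₀)..(s + l₁), x * u s x) :
    ∀ t ∈ Ioo (0:ℝ) T,
      |deriv mi t + c t (xi t) * mi t| ≤
        (K / 2) * (∫ x in (t + l₀)..(t + l₁), |u t x|) *
          (⨆ x ∈ Icc (t + l₀) (t + l₁), |x - xi t| ^ 2) := by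
  rintro t ⟨ht0, htT⟩
  have htI : t ∈ Icc 0 T := ⟨ht0.le, htT.le⟩
  have hab : t + l₀ ≤ t + l₁ := by linarith
  have hdom : ∀ x ∈ Icc (t + l₀) (t + l₁), x ∈ Ici 0 := fun x hx =>
    le_trans (by linarith) hx.1
  have hmass : HasDerivAt mi (∫ x in (t + l₀)..(t + l₁), (ut t x + ux t x)) t := by
    have hU : Ioo 0 T ×ˢ Ioi 0 ⊆ Icc 0 T ×ˢ Ici (0 : ℝ) :=
      prod_mono Ioo_subset_Icc_self Ioi_subset_Ici_self
    rw [show mi = _ from funext hmi]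
    refine hasDerivAt_integral_transport (isOpen_Ioo.prod isOpen_Ioi)
      (fun p hp => hut _ (hU hp).1 _ (hU hp).2) (fun p hp => hux _ (hU hp).1 _ (hU hp).2)
      (hut_cont.mono hU) (hux_cont.mono hU) fun x hx => ⟨⟨ht0, htT⟩, ?_⟩
    rw [uIcc_of_le hab] at hx
    exact lt_of_lt_of_le (by linarith) hx.1
  have hderiv : deriv mi t = -∫ x in (t + l₀)..(t + l₁), c t x * u t x := by
    rw [hmass.deriv, ← intervalIntegral.integral_neg]
    refine integral_congr fun x hx => ?_
    rw [uIcc_of_le hab] at hx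
    linarith [hpde t htI x (hdom x hx)]
  have hu_int : IntervalIntegrable (u t) volume (t + l₀) (t + l₁) :=
    ContinuousOn.intervalIntegrable_of_Icc hab fun x hx =>
      (hux t htI x (hdom x hx)).continuousAt.continuousWithinAt
  have hm : mi t = ∫ x in (t + l₀)..(t + l₁), u t x := hmi t
  have hξ : xi t = centroid (u t) (t + l₀) (t + l₁) := by
    rw [hxi, centroid, ← hm, one_div_mul_eq_div]
  rw [hξ, hderiv, hm, neg_add_eq_sub, ← neg_sub, abs_neg]
  exact abs_integral_mul_sub_centroid_mul_integral_le hab (fun x hx => hcx t htI x (hdom x hx))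
    (fun x hx => hcxx t htI x (hdom x hx)) (fun x hx => hK t htI x (hdom x hx)) hu_int
    (fun x hx => hu_nonneg t htI x (hdom x hx)) (hm ▸ hmi_pos t htI)

/-- The closed-form EBT mass equation `d/dt mᵢ = −c(t,xᵢ)mᵢ`
holds with a second-order error in the cohort diameter:
`|(d/dt) mᵢ(t) + c(t,xᵢ(t)) mᵢ(t)| ≤ (K/2) ‖u(t,·)‖_{L¹(Ωᵢ(t))} max_{Ωᵢ(t)}|x−xᵢ(t)|²`. -/
theorem ebt_closed_form_mass_equation_error
    (T : ℝ) (hT : 0 < T)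
    (u ut ux : ℝ → ℝ → ℝ) (c cx cxx : ℝ → ℝ → ℝ) (K : ℝ)
    (hu_nonneg : ∀ t ∈ Icc (0:ℝ) T, ∀ x ∈ Ici (0:ℝ), 0 ≤ u t x)
    (hut : ∀ t ∈ Icc (0:ℝ) T, ∀ x ∈ Ici (0:ℝ), HasDerivAt (fun s => u s x) (ut t x) t)
    (hux : ∀ t ∈ Icc (0:ℝ) T, ∀ x ∈ Ici (0:ℝ), HasDerivAt (fun y => u t y) (ux t x) x)
    (hu_cont : ContinuousOn (fun p : ℝ × ℝ => u p.1 p.2) (Icc 0 T ×ˢ Ici 0))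
    (hut_cont : ContinuousOn (fun p : ℝ × ℝ => ut p.1 p.2) (Icc 0 T ×ˢ Ici 0))
    (hux_cont : ContinuousOn (fun p : ℝ × ℝ => ux p.1 p.2) (Icc 0 T ×ˢ Ici 0))
    (hc_cont : ContinuousOn (fun p : ℝ × ℝ => c p.1 p.2) (Icc 0 T ×ˢ Ici 0))
    (hcx : ∀ t ∈ Icc (0:ℝ) T, ∀ x ∈ Ici (0:ℝ), HasDerivAt (c t) (cx t x) x)
    (hcxx : ∀ t ∈ Icc (0:ℝ) T, ∀ x ∈ Ici (0:ℝ), HasDerivAt (cx t) (cxx t x) x)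
    (hcxx_cont : ∀ t ∈ Icc (0:ℝ) T, ContinuousOn (cxx t) (Ici 0))
    (hK : ∀ t ∈ Icc (0:ℝ) T, ∀ x ∈ Ici (0:ℝ), |cxx t x| ≤ K)
    (hpde : ∀ t ∈ Icc (0:ℝ) T, ∀ x ∈ Ici (0:ℝ), ut t x + ux t x + c t x * u t x = 0)
    (l₀ l₁ : ℝ) (hl₀ : 0 ≤ l₀) (hl : l₀ < l₁)
    (mi xi : ℝ → ℝ)
    (hmi : ∀ s, mi s = ∫ x in (s + l₀)..(s + l₁), u s x)
    (hmi_pos : ∀ t ∈ Icc (0:ℝ) T, 0 < mi t)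
    (hxi : ∀ s, xi s = (1 / mi s) * ∫ x in (s + l₀)..(s + l₁), x * u s x) :
    ∀ t ∈ Ioo (0:ℝ) T,
      |deriv mi t + c t (xi t) * mi t| ≤
        (K / 2) * (∫ x in (t + l₀)..(t + l₁), |u t x|) *
          (⨆ x ∈ Icc (t + l₀) (t + l₁), |x - xi t| ^ 2) :=
  ebt_closed_form_mass_equation_error_general T u ut ux c cx cxx K hu_nonneg hut hux hut_cont
    hux_cont hcx hcxx hK hpde l₀ l₁ hl₀ hl mi xi hmi hmi_pos hxi
end

section
/- Let u^f ∈ C¹([0,T]×ℝ₊) be nonnegative and satisfy the transport equation ∂_t u^f(t,y) + ∂_y u^f(t,y) + c^f(t,y) u^f(t,y) = 0, where c^f is continuous. Let l_{j−1}(t) = t + l_{j−1}(0), l_j(t) = t + l_j(0) with 0 ≤ l_{j−1}(0) < l_j(0), suppose m_j(t) := ∫_{l_{j−1}(t)}^{l_j(t)} u^f(t,y) dy > 0 on [0,T], and define y_j(t) := (1/m_j(t)) ∫_{l_{j−1}(t)}^{l_j(t)} y u^f(t,y) dy. Then (d/dt) m_j(t) = −∫_{l_{j−1}(t)}^{l_j(t)}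 c^f(t,y) u^f(t,y) dy and (d/dt) y_j(t) = (1/m_j(t)) ∫_{l_{j−1}(t)}^{l_j(t)} (y_j(t) − y) c^f(t,y) u^f(t,y) dy + 1. -/
open MeasureTheory Set intervalIntegral Filter Topology Function ContinuousLinearMap Metric
open scoped Interval

/-!
Substituting `y = s + z` turns an integral over the moving cohort `[s + a, s + b]` into
`∫ z in a..b, g s (s + z)`. Continuous partial derivatives make `g` jointly differentiable, so
`d/ds g(s, s + z) = ∂ₜg + ∂_y g`, which is locally bounded, and one may differentiate under the
integral sign. For `g = φ(y) u` the transport equation turns `∂ₜg + ∂_y g` into `(φ' - φ c) u`: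
`φ = 1` gives the mass, `φ = y` the first moment, and the centroid, their quotient, follows by the
quotient rule.
-/

structure HasContinuousPartialsOn (g gt gy : ℝ → ℝ → ℝ) (U : Set (ℝ × ℝ)) : Prop where
  hasDerivAt_fst : ∀ p ∈ U, HasDerivAt (g · p.2) (gt p.1 p.2) p.1
  hasDerivAt_snd : ∀ p ∈ U, HasDerivAt (g p.1 ·) (gy p.1 p.2) p.2
  continuousOn_fst : ContinuousOn (uncurry gt) U
  continuousOn_snd : ContinuousOn (uncurry gy) U

namespace HasContinuousPartialsOn

variable {g gt gy : ℝ → ℝ → ℝ} {U : Set (ℝ × ℝ)}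

theorem hasStrictFDerivAt (h : HasContinuousPartialsOn g gt gy U) (hU : IsOpen U) {p : ℝ × ℝ}
    (hp : p ∈ U) :
    HasStrictFDerivAt (uncurry g)
      ((toSpanSingleton ℝ (gt p.1 p.2)).coprod (toSpanSingleton ℝ (gy p.1 p.2))) p := by
  have hcont : ∀ {f : ℝ → ℝ → ℝ}, ContinuousOn (uncurry f) U →
      ContinuousAt (fun q : ℝ × ℝ => toSpanSingleton ℝ (f q.1 q.2)) p := fun hf =>
    ((toSpanSingletonCLE (𝕜 := ℝ) (E := ℝ)).continuous.continuousAt).comp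
      (hf.continuousAt (hU.mem_nhds hp))
  exact hasStrictFDerivAt_uncurry_coprod
    (f₁ := fun s y => toSpanSingleton ℝ (gt s y)) (f₂ := fun s y => toSpanSingleton ℝ (gy s y))
    (eventually_of_mem (hU.mem_nhds hp) h.hasDerivAt_fst)
    (eventually_of_mem (hU.mem_nhds hp) h.hasDerivAt_snd)
    (hcont h.continuousOn_fst) (hcont h.continuousOn_snd)

theorem continuousOn (h : HasContinuousPartialsOn g gt gy U) (hU : IsOpen U) :
    ContinuousOn (uncurry g) U := fun _ hp =>
  (h.hasStrictFDerivAt hU hp).continuousAt.continuousWithinAt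

theorem hasDerivAt_comp_add (h : HasContinuousPartialsOn g gt gy U) (hU : IsOpen U) {x z : ℝ}
    (hx : (x, x + z) ∈ U) :
    HasDerivAt (fun s => g s (s + z)) (gt x (x + z) + gy x (x + z)) x := by
  have hline : HasDerivAt (fun s : ℝ => (s, s + z)) ((1 : ℝ), (1 : ℝ)) x :=
    (hasDerivAt_id x).prodMk ((hasDerivAt_id x).add_const z)
  have hcomp := (h.hasStrictFDerivAt hU hx).hasFDerivAt.comp_hasDerivAt x hline
  exact hcomp.congr_deriv (by simp)

theorem weight_mul (h : HasContinuousPartialsOn g gt gy U) (hU : IsOpen U) {φ φ' : ℝ → ℝ}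
    (hφ : ∀ y, HasDerivAt φ (φ' y) y) (hφ' : Continuous φ') :
    HasContinuousPartialsOn (fun s y => φ y * g s y) (fun s y => φ y * gt s y)
      (fun s y => φ' y * g s y + φ y * gy s y) U := by
  have hφc : Continuous φ := continuous_iff_continuousAt.2 fun y => (hφ y).continuousAt
  exact
    { hasDerivAt_fst := fun p hp => (h.hasDerivAt_fst p hp).const_mul (φ p.2)
      hasDerivAt_snd := fun p hp => (hφ p.2).mul (h.hasDerivAt_snd p hp)
      continuousOn_fst := (hφc.comp continuous_snd).continuousOn.mul h.continuousOn_fst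
      continuousOn_snd := ((hφ'.comp continuous_snd).continuousOn.mul (h.continuousOn hU)).add
        ((hφc.comp continuous_snd).continuousOn.mul h.continuousOn_snd) }

theorem hasDerivAt_integral_of_translating_bounds (h : HasContinuousPartialsOn g gt gy U)
    (hU : IsOpen U) {a b t : ℝ} (hK : ∀ y ∈ [[t + a, t + b]], (t, y) ∈ U) :
    HasDerivAt (fun s => ∫ y in (s + a)..(s + b), g s y)
      (∫ y in (t + a)..(t + b), (gt t y + gy t y)) t := by
  -- A compact tube `closedBall t δ ×ˢ [[a, b]] ⊆ V` gives the uniform bound needed for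
  -- dominated differentiation.
  set V : Set (ℝ × ℝ) := (fun q => (q.1, q.1 + q.2)) ⁻¹' U
  have hV : IsOpen V := hU.preimage (by fun_prop)
  obtain ⟨δ, hδ, hδV⟩ := (isCompact_singleton.prod isCompact_uIcc).exists_cthickening_subset_open
    hV (by
      rintro ⟨x, z⟩ ⟨rfl, hz⟩
      exact hK _ (image_const_add_uIcc t a b ▸ mem_image_of_mem _ hz))
  have hS : closedBall t δ ×ˢ [[a, b]] ⊆ V := by
    rintro ⟨x, z⟩ ⟨hx, hz⟩
    refine hδV (Metric.mem_cthickening_of_dist_le _ (t, z) _ _ ⟨rfl, hz⟩ ?_)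
    simpa [Prod.dist_eq] using hx
  have hF : ContinuousOn (fun q : ℝ × ℝ => g q.1 (q.1 + q.2)) V :=
    (h.continuousOn hU).comp (by fun_prop) (mapsTo_preimage _ _)
  have hF' : ContinuousOn (fun q : ℝ × ℝ => gt q.1 (q.1 + q.2) + gy q.1 (q.1 + q.2)) V :=
    (h.continuousOn_fst.add h.continuousOn_snd).comp (by fun_prop) (mapsTo_preimage _ _)
  obtain ⟨C, hC⟩ :=
    ((isCompact_closedBall t δ).prod isCompact_uIcc).exists_bound_of_continuousOn (hF'.mono hS)
  have hslice : ∀ {f : ℝ × ℝ → ℝ}, ContinuousOn f V → ∀ x ∈ closedBall t δ,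
      ContinuousOn (fun z => f (x, z)) [[a, b]] := fun hf x hx =>
    hf.comp (by fun_prop) fun z hz => hS ⟨hx, hz⟩
  have hball : closedBall t δ ∈ 𝓝 t := closedBall_mem_nhds t hδ
  have key := intervalIntegral.hasDerivAt_integral_of_dominated_loc_of_deriv_le (μ := volume)
    (F := fun x z => g x (x + z)) (F' := fun x z => gt x (x + z) + gy x (x + z))
    (bound := fun _ => C) hball
    (eventually_of_mem hball fun x hx =>
      ((hslice hF x hx).mono uIoc_subset_uIcc).aestronglyMeasurable measurableSet_uIoc)
    (hslice hF t (mem_closedBall_self hδ.le)).intervalIntegrable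
    (((hslice hF' t (mem_closedBall_self hδ.le)).mono uIoc_subset_uIcc).aestronglyMeasurable
      measurableSet_uIoc)
    (ae_of_all _ fun z hz x hx => hC (x, z) ⟨hx, uIoc_subset_uIcc hz⟩)
    intervalIntegrable_const
    (ae_of_all _ fun z hz x hx => h.hasDerivAt_comp_add hU
      (hS (mk_mem_prod hx (uIoc_subset_uIcc hz))))
  simpa only [integral_comp_add_left (g _), integral_comp_add_left (fun y => gt t y + gy t y)]
    using key.2

end HasContinuousPartialsOn

theorem intervalIntegrable_of_continuousOn_uncurry {f : ℝ → ℝ → ℝ} {U : Set (ℝ × ℝ)}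
    (hf : ContinuousOn (uncurry f) U) {t a b : ℝ} (hK : ∀ y ∈ [[a, b]], (t, y) ∈ U) :
    IntervalIntegrable (f t) volume a b :=
  (hf.comp (by fun_prop) hK).intervalIntegrable

section Transport

variable {u ut uy c : ℝ → ℝ → ℝ} {U : Set (ℝ × ℝ)} {a b t : ℝ}

theorem hasDerivAt_integral_weight_mul_of_transport (hu : HasContinuousPartialsOn u ut uy U)
    (hU : IsOpen U) (hpde : ∀ p ∈ U, ut p.1 p.2 + uy p.1 p.2 + c p.1 p.2 * u p.1 p.2 = 0)
    {φ φ' : ℝ → ℝ} (hφ : ∀ y, HasDerivAt φ (φ' y) y) (hφ' : Continuous φ')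
    (hK : ∀ y ∈ [[t + a, t + b]], (t, y) ∈ U) :
    HasDerivAt (fun s => ∫ y in (s + a)..(s + b), φ y * u s y)
      (∫ y in (t + a)..(t + b), (φ' y * u t y - φ y * (c t y * u t y))) t := by
  refine ((hu.weight_mul hU hφ hφ').hasDerivAt_integral_of_translating_bounds hU hK).congr_deriv
    (integral_congr fun y hy => ?_)
  linear_combination φ y * hpde (t, y) (hK y hy)

theorem hasDerivAt_mass_of_transport (hu : HasContinuousPartialsOn u ut uy U) (hU : IsOpen U)
    (hpde : ∀ p ∈ U, ut p.1 p.2 + uy p.1 p.2 + c p.1 p.2 * u p.1 p.2 = 0)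
    (hK : ∀ y ∈ [[t + a, t + b]], (t, y) ∈ U) :
    HasDerivAt (fun s => ∫ y in (s + a)..(s + b), u s y)
      (-∫ y in (t + a)..(t + b), c t y * u t y) t := by
  simpa [intervalIntegral.integral_neg] using hasDerivAt_integral_weight_mul_of_transport hu hU
    hpde (fun _ => hasDerivAt_const _ (1 : ℝ)) continuous_const hK

theorem hasDerivAt_first_moment_of_transport (hu : HasContinuousPartialsOn u ut uy U)
    (hU : IsOpen U) (hpde : ∀ p ∈ U, ut p.1 p.2 + uy p.1 p.2 + c p.1 p.2 * u p.1 p.2 = 0)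
    (hc : ContinuousOn (uncurry c) U) (hK : ∀ y ∈ [[t + a, t + b]], (t, y) ∈ U) :
    HasDerivAt (fun s => ∫ y in (s + a)..(s + b), y * u s y)
      ((∫ y in (t + a)..(t + b), u t y) - ∫ y in (t + a)..(t + b), y * (c t y * u t y)) t := by
  have hycu : ContinuousOn (uncurry fun s y => y * (c s y * u s y)) U :=
    continuous_snd.continuousOn.mul (hc.mul (hu.continuousOn hU))
  rw [← intervalIntegral.integral_sub (intervalIntegrable_of_continuousOn_uncurry
    (hu.continuousOn hU) hK) (intervalIntegrable_of_continuousOn_uncurry hycu hK)]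
  simpa using hasDerivAt_integral_weight_mul_of_transport hu hU hpde hasDerivAt_id
    continuous_const hK

end Transport

theorem hasDerivAt_centroid {m n y : ℝ → ℝ} {I J t : ℝ} (hm : HasDerivAt m (-I) t)
    (hn : HasDerivAt n (m t - J) t) (hmt : m t ≠ 0) (hy : ∀ s, y s = 1 / m s * n s) :
    HasDerivAt y (1 / m t * (y t * I - J) + 1) t := by
  rw [show y = fun s => n s / m s from funext fun s => (hy s).trans (one_div_mul_eq_div _ _)]
  exact (hn.div hm hmt).congr_deriv (by field_simp; ring)

theorem ebt_female_cohort_mass_and_location_derivative_general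
    (T : ℝ)
    (u ut uy c : ℝ → ℝ → ℝ)
    (hut : ∀ t ∈ Icc (0:ℝ) T, ∀ y ∈ Ici (0:ℝ), HasDerivAt (fun s => u s y) (ut t y) t)
    (huy : ∀ t ∈ Icc (0:ℝ) T, ∀ y ∈ Ici (0:ℝ), HasDerivAt (fun z => u t z) (uy t y) y)
    (hut_cont : ContinuousOn (fun p : ℝ × ℝ => ut p.1 p.2) (Icc 0 T ×ˢ Ici 0))
    (huy_cont : ContinuousOn (fun p : ℝ × ℝ => uy p.1 p.2) (Icc 0 T ×ˢ Ici 0))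
    (hc_cont : ContinuousOn (fun p : ℝ × ℝ => c p.1 p.2) (Icc 0 T ×ˢ Ici 0))
    (hpde : ∀ t ∈ Icc (0:ℝ) T, ∀ y ∈ Ici (0:ℝ), ut t y + uy t y + c t y * u t y = 0)
    (l₀ l₁ : ℝ) (hl₀ : 0 ≤ l₀) (hl : l₀ < l₁)
    (mj yj : ℝ → ℝ)
    (hmj : ∀ s, mj s = ∫ y in (s + l₀)..(s + l₁), u s y)
    (hmj_pos : ∀ t ∈ Icc (0:ℝ) T, 0 < mj t)
    (hyj : ∀ s, yj s = (1 / mj s) * ∫ y in (s + l₀)..(s + l₁), y * u s y) :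
    ∀ t ∈ Ioo (0:ℝ) T,
      HasDerivAt mj (-∫ y in (t + l₀)..(t + l₁), c t y * u t y) t ∧
      HasDerivAt yj
        ((1 / mj t) * (∫ y in (t + l₀)..(t + l₁), (yj t - y) * (c t y * u t y)) + 1) t := by
  intro t ht
  set U := Ioo (0:ℝ) T ×ˢ Ioi (0:ℝ)
  have hUsub : U ⊆ Icc 0 T ×ˢ Ici 0 := prod_mono Ioo_subset_Icc_self Ioi_subset_Ici_self
  have hU : IsOpen U := isOpen_Ioo.prod isOpen_Ioi
  have hu : HasContinuousPartialsOn u ut uy U :=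
    ⟨fun p hp => hut _ (hUsub hp).1 _ (hUsub hp).2, fun p hp => huy _ (hUsub hp).1 _ (hUsub hp).2,
      hut_cont.mono hUsub, huy_cont.mono hUsub⟩
  have hpdeU : ∀ p ∈ U, ut p.1 p.2 + uy p.1 p.2 + c p.1 p.2 * u p.1 p.2 = 0 :=
    fun p hp => hpde _ (hUsub hp).1 _ (hUsub hp).2
  have hcohort : ∀ y ∈ [[t + l₀, t + l₁]], (t, y) ∈ U := fun y hy => by
    rw [uIcc_of_le (by linarith)] at hy
    exact ⟨ht, show 0 < y by linarith [ht.1, hy.1]⟩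
  have hm := hasDerivAt_mass_of_transport hu hU hpdeU hcohort
  have hn := hasDerivAt_first_moment_of_transport hu hU hpdeU (hc_cont.mono hUsub) hcohort
  rw [← funext hmj] at hm
  rw [← hmj] at hn
  refine ⟨hm, (hasDerivAt_centroid hm hn (hmj_pos t ⟨ht.1.le, ht.2.le⟩).ne' hyj).congr_deriv ?_⟩
  have hcu : ContinuousOn (uncurry fun s y => c s y * u s y) U :=
    (hc_cont.mono hUsub).mul (hu.continuousOn hU)
  rw [← intervalIntegral.integral_const_mul, ← intervalIntegral.integral_sub
    ((intervalIntegrable_of_continuousOn_uncurry hcu hcohort).const_mul _)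
    (intervalIntegrable_of_continuousOn_uncurry (f := fun s y => y * (c s y * u s y))
      (continuous_snd.continuousOn.mul hcu) hcohort)]
  simp_rw [sub_mul]

/-- For the female density of the two-sex model, the mass and
location of an internal cohort moving along characteristics satisfy
`(d/dt) mⱼ(t) = −∫_{Ωⱼ(t)} c^f u^f dy` and
`(d/dt) yⱼ(t) = (1/mⱼ(t)) ∫_{Ωⱼ(t)} (yⱼ(t) − y) c^f u^f dy + 1`. -/
theorem ebt_female_cohort_mass_and_location_derivative
    (T : ℝ) (hT : 0 < T)
    (u ut uy c : ℝ → ℝ → ℝ)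
    (hu_nonneg : ∀ t ∈ Icc (0:ℝ) T, ∀ y ∈ Ici (0:ℝ), 0 ≤ u t y)
    (hut : ∀ t ∈ Icc (0:ℝ) T, ∀ y ∈ Ici (0:ℝ), HasDerivAt (fun s => u s y) (ut t y) t)
    (huy : ∀ t ∈ Icc (0:ℝ) T, ∀ y ∈ Ici (0:ℝ), HasDerivAt (fun z => u t z) (uy t y) y)
    (hu_cont : ContinuousOn (fun p : ℝ × ℝ => u p.1 p.2) (Icc 0 T ×ˢ Ici 0))
    (hut_cont : ContinuousOn (fun p : ℝ × ℝ => ut p.1 p.2) (Icc 0 T ×ˢ Ici 0))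
    (huy_cont : ContinuousOn (fun p : ℝ × ℝ => uy p.1 p.2) (Icc 0 T ×ˢ Ici 0))
    (hc_cont : ContinuousOn (fun p : ℝ × ℝ => c p.1 p.2) (Icc 0 T ×ˢ Ici 0))
    (hpde : ∀ t ∈ Icc (0:ℝ) T, ∀ y ∈ Ici (0:ℝ), ut t y + uy t y + c t y * u t y = 0)
    (l₀ l₁ : ℝ) (hl₀ : 0 ≤ l₀) (hl : l₀ < l₁)
    (mj yj : ℝ → ℝ)
    (hmj : ∀ s, mj s = ∫ y in (s + l₀)..(s + l₁), u s y)
    (hmj_pos : ∀ t ∈ Icc (0:ℝ) T, 0 < mj t)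
    (hyj : ∀ s, yj s = (1 / mj s) * ∫ y in (s + l₀)..(s + l₁), y * u s y) :
    ∀ t ∈ Ioo (0:ℝ) T,
      HasDerivAt mj (-∫ y in (t + l₀)..(t + l₁), c t y * u t y) t ∧
      HasDerivAt yj
        ((1 / mj t) * (∫ y in (t + l₀)..(t + l₁), (yj t - y) * (c t y * u t y)) + 1) t :=
  ebt_female_cohort_mass_and_location_derivative_general T u ut uy c hut huy hut_cont huy_cont
    hc_cont hpde l₀ l₁ hl₀ hl mj yj hmj hmj_pos hyj
end
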